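/- arXiv:2109.00671 — 7 statements merged into one kernel-verified Lean document; each statement's English description precedes it below -/
import Mathlib

section
/- Let R be a noncommutative ring (e.g. p×p real matrices) and let A be an n×n block matrix over R with invertible submatrix A^{i,j} (A with row i and column j removed). Then the quasi-determinant |A|_{i,j} := a_{i,j} - r_i^j (A^{i,j})^{-1} c_j^i satisfies: if A itself is invertible, then the (j,i) entry of A^{-1} equals |A|_{i,j}^{-1} whenever |A|_{i,j} is invertible. -/
open Matrix

private lemma sum_neg_mul_assoc {R : Type*} [Ring R] {ι : Type*} (S : Finset ι)
    (a w : ι → R) (b : R) :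
    ∑ x ∈ S, -(a x * (w x * b)) = -((∑ x ∈ S, a x * w x) * b) := by
  rw [Finset.sum_mul, ← Finset.sum_neg_distrib]
  simp [mul_assoc]

/-- Quasi-determinant and the inverse matrix: for an `(n+1) × (n+1)` matrix `A` over a
noncommutative ring `R`, with `A^{i,j}` (row `i`, column `j` removed) invertible and `A`
invertible, the `(j,i)` entry of `A⁻¹` is the inverse of the quasi-determinant
`|A|_{i,j} = a_{i,j} - r_i^j (A^{i,j})⁻¹ c_j^i`, whenever the latter is invertible. -/
theorem stmt0 {R : Type*} [Ring R] {n : ℕ}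
    (A : Matrix (Fin (n + 1)) (Fin (n + 1)) R) (i j : Fin (n + 1))
    [Invertible (A.submatrix i.succAbove j.succAbove)]
    [Invertible A]
    (q : R)
    (hq : q = A i j -
      (fun k => A i (j.succAbove k)) ⬝ᵥ
        (⅟(A.submatrix i.succAbove j.succAbove) *ᵥ (fun k => A (i.succAbove k) j)))
    [Invertible q] :
    (⅟A) j i = ⅟q := by
  obtain ⟨D, hD⟩ : ∃ D, D = A.submatrix i.succAbove j.succAbove := ⟨_, rfl⟩
  obtain ⟨E, hE⟩ : ∃ E, E = ⅟(A.submatrix i.succAbove j.succAbove) := ⟨_, rfl⟩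
  obtain ⟨r, hr⟩ : ∃ r : Fin n → R, r = fun k => A i (j.succAbove k) := ⟨_, rfl⟩
  obtain ⟨c, hc⟩ : ∃ c : Fin n → R, c = fun k => A (i.succAbove k) j := ⟨_, rfl⟩
  obtain ⟨b, hb⟩ : ∃ b : R, b = (⅟A) j i := ⟨_, rfl⟩
  obtain ⟨v, hv⟩ : ∃ v : Fin n → R, v = fun k => (⅟A) (j.succAbove k) i := ⟨_, rfl⟩
  have hED : E * D = 1 := by rw [hE, hD]; exact invOf_mul_self _
  have hq' : q = A i j - r ⬝ᵥ (E *ᵥ c) := by rw [hq, hE, hr, hc]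
  have hAB : A * ⅟A = 1 := mul_invOf_self A
  have key : ∀ i' : Fin (n + 1),
      A i' j * b + ∑ k, A i' (j.succAbove k) * v k = (1 : Matrix _ _ R) i' i := by
    intro i'
    have := congrFun (congrFun hAB i') i
    rw [Matrix.mul_apply, Fin.sum_univ_succAbove (fun k => A i' k * (⅟A) k i) j] at this
    rw [hb, hv]
    exact this
  -- rows other than `i` give: `D *ᵥ v = -(c * b)` entrywise
  have h2 : D *ᵥ v = fun m => -(c m * b) := by
    funext m
    have h := key (i.succAbove m)
    rw [Matrix.one_apply_ne (Fin.succAbove_ne i m)] at h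
    rw [hD, hc]
    simp only [Matrix.mulVec, dotProduct, Matrix.submatrix_apply]
    exact eq_neg_of_add_eq_zero_right h
  have hvval : v = fun m => -((E *ᵥ c) m * b) := by
    have h3 : E *ᵥ (D *ᵥ v) = v := by
      rw [Matrix.mulVec_mulVec, hED, Matrix.one_mulVec]
    rw [← h3, h2]
    funext m
    simp only [Matrix.mulVec, dotProduct, mul_neg]
    exact sum_neg_mul_assoc _ _ _ _
  -- row `i`
  have h1 := key i
  rw [Matrix.one_apply_eq] at h1
  have hrv : ∑ k, A i (j.succAbove k) * v k = -((r ⬝ᵥ (E *ᵥ c)) * b) := by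
    subst hr
    rw [hvval]
    simp only [dotProduct, mul_neg]
    exact sum_neg_mul_assoc _ _ _ _
  have hqb : q * b = 1 := by
    rw [hq', sub_mul, sub_eq_add_neg]
    rw [hrv] at h1
    exact h1
  rw [hb] at hqb
  exact (invOf_eq_right_inv hqb).symm
end

section
/- Let A = (a_{ij}) be an n×n matrix over the ring of p×p real matrices such that all quasi-determinants |A|_{ij} are defined and invertible. Then x_1,…,x_n ∈ ℝ^{p×p} satisfy the linear system a_{i1}x_1 + ⋯ + a_{in}x_n = ξ_i for i = 1,…,n if and only if x_i = Σ_{j=1}^n |A|_{j,i}^{-1} ξ_j for each i. -/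
open Matrix


section Aux

variable {α : Type*} [Ring α] {m n : Type*}
  [Fintype m] [Fintype n] [DecidableEq m] [DecidableEq n]

lemma isUnit_fromBlocks_aux (S S' : Matrix m m α) (B : Matrix m n α) (C : Matrix n m α)
    (D D' : Matrix n n α) (hDD' : D * D' = 1) (hD'D : D' * D = 1)
    (hSS' : S * S' = 1) (hS'S : S' * S = 1) :
    IsUnit (Matrix.fromBlocks (S + B * D' * C) B C D) := by
  have cDD'm : ∀ (X : Matrix n m α), D * (D' * X) = X := fun X => by
    rw [← Matrix.mul_assoc, hDD', Matrix.one_mul]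
  have cDD'n : ∀ (X : Matrix n n α), D * (D' * X) = X := fun X => by
    rw [← Matrix.mul_assoc, hDD', Matrix.one_mul]
  have cD'Dm : ∀ (X : Matrix n m α), D' * (D * X) = X := fun X => by
    rw [← Matrix.mul_assoc, hD'D, Matrix.one_mul]
  have cD'Dn : ∀ (X : Matrix n n α), D' * (D * X) = X := fun X => by
    rw [← Matrix.mul_assoc, hD'D, Matrix.one_mul]
  have cSS'm : ∀ (X : Matrix m m α), S * (S' * X) = X := fun X => by
    rw [← Matrix.mul_assoc, hSS', Matrix.one_mul]
  have cSS'n : ∀ (X : Matrix m n α), S * (S' * X) = X := fun X => by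
    rw [← Matrix.mul_assoc, hSS', Matrix.one_mul]
  have cS'Sm : ∀ (X : Matrix m m α), S' * (S * X) = X := fun X => by
    rw [← Matrix.mul_assoc, hS'S, Matrix.one_mul]
  have cS'Sn : ∀ (X : Matrix m n α), S' * (S * X) = X := fun X => by
    rw [← Matrix.mul_assoc, hS'S, Matrix.one_mul]
  rw [isUnit_iff_exists]
  refine ⟨Matrix.fromBlocks S' (-(S' * B * D')) (-(D' * C * S')) (D' + D' * C * S' * B * D'),
    ?_, ?_⟩ <;>
  · rw [Matrix.fromBlocks_multiply, ← Matrix.fromBlocks_one]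
    rw [Matrix.fromBlocks_inj]
    refine ⟨?_, ?_, ?_, ?_⟩ <;>
    · simp only [Matrix.add_mul, Matrix.mul_add, Matrix.sub_mul, Matrix.mul_sub,
        Matrix.neg_mul, Matrix.mul_neg, Matrix.mul_assoc, Matrix.mul_one, Matrix.one_mul,
        hDD', hD'D, hSS', hS'S, cDD'm, cDD'n, cD'Dm, cD'Dn, cSS'm, cSS'n, cS'Sm, cS'Sn]
      abel

end Aux

section Aux2

variable {α : Type*} [Ring α] {l m : Type*}
  [Fintype m] [DecidableEq m] [Fintype l] [DecidableEq l]

lemma isUnit_submatrix_of_isUnit {N : Matrix m m α} (e : l ≃ m) (h : IsUnit N) :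
    IsUnit (N.submatrix e e) := by
  rcases isUnit_iff_exists.mp h with ⟨N', h1, h2⟩
  exact isUnit_iff_exists.mpr ⟨N'.submatrix e e,
    by rw [Matrix.submatrix_mul_equiv, h1, Matrix.submatrix_one_equiv],
    by rw [Matrix.submatrix_mul_equiv, h2, Matrix.submatrix_one_equiv]⟩

end Aux2

lemma oneByOne_mul_apply {α : Type*} [Ring α] {n : Type*} [Fintype n]
    (r : n → α) (Mi : Matrix n n α) (c : n → α) :
    ((Matrix.of fun (_ : Unit) k => r k) * Mi * (Matrix.of fun k (_ : Unit) => c k))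
        PUnit.unit PUnit.unit = r ⬝ᵥ (Mi *ᵥ c) := by
  simp only [Matrix.mul_apply, dotProduct, Matrix.mulVec, Matrix.of_apply,
    Finset.sum_mul, Finset.mul_sum, mul_assoc]
  rw [Finset.sum_comm]



/-- The quasi-determinant `|A|_{i,j} = a_{i,j} - r_i^j (A^{i,j})⁻¹ c_j^i` of a block
matrix over the ring of `p × p` real matrices. -/
noncomputable def quasiDet {p n : ℕ}
    (A : Matrix (Fin (n + 1)) (Fin (n + 1)) (Matrix (Fin p) (Fin p) ℝ))
    (i j : Fin (n + 1)) : Matrix (Fin p) (Fin p) ℝ :=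
  A i j -
    (fun k => A i (j.succAbove k)) ⬝ᵥ
      (Ring.inverse (A.submatrix i.succAbove j.succAbove) *ᵥ (fun k => A (i.succAbove k) j))

lemma isUnit_A {p n : ℕ}
    (A : Matrix (Fin (n + 1)) (Fin (n + 1)) (Matrix (Fin p) (Fin p) ℝ))
    (hsub : IsUnit (A.submatrix (0 : Fin (n+1)).succAbove (0 : Fin (n+1)).succAbove))
    (hq : IsUnit (quasiDet A 0 0)) : IsUnit A := by
  let e : Fin (n+1) ≃ Unit ⊕ Fin n :=
    (finSuccEquiv' 0).trans ((Equiv.optionEquivSumPUnit _).trans (Equiv.sumComm _ _))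
  have he0 : e 0 = Sum.inl PUnit.unit := by
    simp [e, finSuccEquiv'_at]
  have heS : ∀ k : Fin n, e k.succ = Sum.inr k := fun k => by
    have h0 : (0 : Fin (n+1)).succAbove k = k.succ := by rw [Fin.succAbove_zero]
    have h2 : finSuccEquiv' (0 : Fin (n+1)) k.succ = some k := by
      rw [← h0]; exact finSuccEquiv'_succAbove 0 k
    simp [e, h2]
  set M0 := A.submatrix (0 : Fin (n+1)).succAbove (0 : Fin (n+1)).succAbove with hM0
  set Mi0 := Ring.inverse M0 with hMi0
  let a0 : Matrix Unit Unit (Matrix (Fin p) (Fin p) ℝ) := Matrix.of fun _ _ => quasiDet A 0 0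
  let a0' : Matrix Unit Unit (Matrix (Fin p) (Fin p) ℝ) := Matrix.of fun _ _ => Ring.inverse (quasiDet A 0 0)
  let Br : Matrix Unit (Fin n) (Matrix (Fin p) (Fin p) ℝ) := Matrix.of fun _ k => A 0 ((0 : Fin (n+1)).succAbove k)
  let Cc : Matrix (Fin n) Unit (Matrix (Fin p) (Fin p) ℝ) := Matrix.of fun k _ => A ((0 : Fin (n+1)).succAbove k) 0
  have hSS' : a0 * a0' = 1 := by
    apply Matrix.ext; intro i j
    rw [Matrix.mul_apply, Fintype.sum_unique]
    show quasiDet A 0 0 * Ring.inverse (quasiDet A 0 0) = (1 : Matrix Unit Unit (Matrix (Fin p) (Fin p) ℝ)) i j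
    rcases i; rcases j
    rw [Ring.mul_inverse_cancel _ hq, Matrix.one_apply_eq]
  have hS'S : a0' * a0 = 1 := by
    apply Matrix.ext; intro i j
    rw [Matrix.mul_apply, Fintype.sum_unique]
    show Ring.inverse (quasiDet A 0 0) * quasiDet A 0 0 = (1 : Matrix Unit Unit (Matrix (Fin p) (Fin p) ℝ)) i j
    rcases i; rcases j
    rw [Ring.inverse_mul_cancel _ hq, Matrix.one_apply_eq]
  have hblocks : IsUnit (Matrix.fromBlocks (a0 + Br * Mi0 * Cc) Br Cc M0) :=
    isUnit_fromBlocks_aux a0 a0' Br Cc M0 Mi0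
      (Ring.mul_inverse_cancel _ hsub) (Ring.inverse_mul_cancel _ hsub) hSS' hS'S
  have hAeq : A = (Matrix.fromBlocks (a0 + Br * Mi0 * Cc) Br Cc M0).submatrix e e := by
    apply Matrix.ext; intro i j
    rw [Matrix.submatrix_apply]
    induction i using Fin.cases with
    | zero =>
      induction j using Fin.cases with
      | zero =>
        rw [he0]
        show A 0 0 = (a0 + Br * Mi0 * Cc) PUnit.unit PUnit.unit
        rw [Matrix.add_apply, oneByOne_mul_apply]
        show A 0 0 = quasiDet A 0 0 + _
        rw [quasiDet, sub_add_cancel]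
      | succ k =>
        rw [he0, heS]
        rfl
    | succ k =>
      induction j using Fin.cases with
      | zero =>
        rw [he0, heS]
        rfl
      | succ k' =>
        rw [heS, heS]
        show A k.succ k'.succ = M0 k k'
        rw [hM0, Matrix.submatrix_apply, Fin.succAbove_zero]
  rw [hAeq]
  exact isUnit_submatrix_of_isUnit e hblocks

lemma inverse_entry {p n : ℕ}
    (A : Matrix (Fin (n + 1)) (Fin (n + 1)) (Matrix (Fin p) (Fin p) ℝ))
    (hsub : ∀ (i j : Fin (n + 1)), IsUnit (A.submatrix i.succAbove j.succAbove))
    (hq : ∀ i j, IsUnit (quasiDet A i j)) (hA : IsUnit A) (i j : Fin (n + 1)) :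
    (Ring.inverse A) i j = Ring.inverse (quasiDet A j i) := by
  set B := Ring.inverse A with hB
  have hAB : A * B = 1 := Ring.mul_inverse_cancel A hA
  have hMiM : Ring.inverse (A.submatrix j.succAbove i.succAbove)
      * (A.submatrix j.succAbove i.succAbove) = 1 :=
    Ring.inverse_mul_cancel _ (hsub j i)
  have hrow : ∀ m, ∑ k, A m k * B k j
      = if m = j then (1 : Matrix (Fin p) (Fin p) ℝ) else 0 := by
    intro m
    have h := congrFun (congrFun hAB m) j
    rwa [Matrix.mul_apply, Matrix.one_apply] at h
  have hMu : (A.submatrix j.succAbove i.succAbove) *ᵥ (fun k => B (i.succAbove k) j)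
      = fun m' => -(A (j.succAbove m') i * B i j) := by
    funext m'
    have h := hrow (j.succAbove m')
    rw [Fin.sum_univ_succAbove (fun k => A (j.succAbove m') k * B k j) i,
      if_neg (Fin.succAbove_ne j m')] at h
    have h2 : ∑ k, A (j.succAbove m') (i.succAbove k) * B (i.succAbove k) j
        = -(A (j.succAbove m') i * B i j) := eq_neg_of_add_eq_zero_right h
    simpa [Matrix.mulVec, dotProduct] using h2
  have hu : (fun k => B (i.succAbove k) j)
      = Ring.inverse (A.submatrix j.succAbove i.succAbove) *ᵥ
          (fun m' => -(A (j.succAbove m') i * B i j)) := by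
    rw [← hMu, Matrix.mulVec_mulVec, hMiM, Matrix.one_mulVec]
  have hqb : quasiDet A j i * B i j = 1 := by
    have h := hrow j
    rw [Fin.sum_univ_succAbove (fun k => A j k * B k j) i, if_pos rfl] at h
    have hsum : ∑ k, A j (i.succAbove k) * B (i.succAbove k) j
        = -(((fun k => A j (i.succAbove k)) ⬝ᵥ
              (Ring.inverse (A.submatrix j.succAbove i.succAbove) *ᵥ
                fun k => A (j.succAbove k) i)) * B i j) := by
      have hk : ∀ k, B (i.succAbove k) j
          = (Ring.inverse (A.submatrix j.succAbove i.succAbove) *ᵥ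
              (fun m' => -(A (j.succAbove m') i * B i j))) k := fun k => congrFun hu k
      simp only [hk]
      simp only [Matrix.mulVec, dotProduct, Finset.mul_sum, Finset.sum_mul,
        mul_assoc, mul_neg, neg_mul, Finset.sum_neg_distrib]
    rw [hsum, ← sub_eq_add_neg] at h
    rw [quasiDet, Matrix.sub_mul]
    exact h
  calc B i j = 1 * B i j := (one_mul _).symm
    _ = (Ring.inverse (quasiDet A j i) * quasiDet A j i) * B i j := by
        rw [Ring.inverse_mul_cancel _ (hq j i)]
    _ = Ring.inverse (quasiDet A j i) * (quasiDet A j i * B i j) := mul_assoc _ _ _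
    _ = Ring.inverse (quasiDet A j i) := by rw [hqb, mul_one]


/-- Noncommutative linear systems solved by quasi-determinants: if all quasi-determinants
of `A` are defined (the submatrices `A^{i,j}` are invertible) and invertible, then
`Σ_j a_{ij} x_j = ξ_i` for all `i` iff `x_i = Σ_j |A|_{j,i}⁻¹ ξ_j` for all `i`. -/
theorem stmt1 {p n : ℕ}
    (A : Matrix (Fin (n + 1)) (Fin (n + 1)) (Matrix (Fin p) (Fin p) ℝ))
    (hsub : ∀ (i j : Fin (n + 1)), IsUnit (A.submatrix i.succAbove j.succAbove))
    (hq : ∀ i j, IsUnit (quasiDet A i j))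
    (x ξ : Fin (n + 1) → Matrix (Fin p) (Fin p) ℝ) :
    (∀ i, ∑ j, A i j * x j = ξ i) ↔
      ∀ i, x i = ∑ j, Ring.inverse (quasiDet A j i) * ξ j := by
  have hA : IsUnit A := isUnit_A A (hsub 0 0) (hq 0 0)
  have key : ∀ i j, (Ring.inverse A) i j = Ring.inverse (quasiDet A j i) :=
    inverse_entry A hsub hq hA
  constructor
  · intro h i
    have hξ : A *ᵥ x = ξ := by
      funext m
      simpa [Matrix.mulVec, dotProduct] using h m
    calc x i = (1 *ᵥ x) i := by rw [Matrix.one_mulVec]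
      _ = ((Ring.inverse A * A) *ᵥ x) i := by rw [Ring.inverse_mul_cancel A hA]
      _ = (Ring.inverse A *ᵥ (A *ᵥ x)) i := by rw [Matrix.mulVec_mulVec]
      _ = (Ring.inverse A *ᵥ ξ) i := by rw [hξ]
      _ = ∑ j, Ring.inverse A i j * ξ j := by simp [Matrix.mulVec, dotProduct]
      _ = ∑ j, Ring.inverse (quasiDet A j i) * ξ j := by simp only [key]
  · intro h i
    have hx : x = Ring.inverse A *ᵥ ξ := by
      funext m
      rw [h m]
      simp [Matrix.mulVec, dotProduct, key]
    calc ∑ j, A i j * x j = (A *ᵥ x) i := by simp [Matrix.mulVec, dotProduct]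
      _ = (A *ᵥ (Ring.inverse A *ᵥ ξ)) i := by rw [hx]
      _ = ((A * Ring.inverse A) *ᵥ ξ) i := by rw [Matrix.mulVec_mulVec]
      _ = ξ i := by rw [Ring.mul_inverse_cancel A hA, Matrix.one_mulVec]
end

section
/- Let dμ(x;t) be a t-dependent symmetric matrix measure with ∂_t dμ(x;t) = x dμ(x;t), and let {P_n(x;t)} be the associated monic matrix orthogonal polynomials with normalizations H_n(t). Then ∂_t P_n(x;t) = -b_n P_{n-1}(x;t) where b_n = H_n H_{n-1}^{-1}. -/
open Polynomial Finset Matrix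

/-! Differentiating the orthogonality relations `⟨P_n, x^k⟩ = 0` (`k < n`) in `t`, and using
`∂_t m_k = m_{k+1}`, gives `⟨∂_t P_n, x^k⟩ = -⟨P_n, x^{k+1}⟩`. The right-hand side vanishes for
`k < n - 1` and equals `-H_n = -b_n H_{n-1} = -b_n ⟨P_{n-1}, x^{n-1}⟩` for `k = n - 1`, so
`∂_t P_n + b_n P_{n-1}` (of degree `< n`, since `P_n` is monic) is orthogonal to `1, …, x^{n-1}`.
Invertibility of the `H_k` makes such a polynomial vanish: subtract the multiple of `P_{N-1}`
that kills the top coefficient and induct on the degree. -/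

/-- The pairing `⟨f, x^k⟩ = ∫ f(x) dμ(x) x^k = Σ_i f_i m_{i+k}` of a matrix polynomial
with the monomial `x^k`, in terms of the moments `m` of the measure. -/
noncomputable def momPair {p : ℕ} (m : ℕ → Matrix (Fin p) (Fin p) ℝ)
    (f : Polynomial (Matrix (Fin p) (Fin p) ℝ)) (k : ℕ) : Matrix (Fin p) (Fin p) ℝ :=
  ∑ i ∈ range (f.natDegree + 1), f.coeff i * m (i + k)

noncomputable def matDeriv {ι κ : Type*} (F : ℝ → Matrix ι κ ℝ) (t : ℝ) : Matrix ι κ ℝ :=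
  Matrix.of fun i j => deriv (fun s => F s i j) t

lemma matDeriv_const {ι κ : Type*} (A : Matrix ι κ ℝ) (t : ℝ) :
    matDeriv (fun _ => A) t = 0 := by
  ext i j
  exact deriv_const t (A i j)

lemma Polynomial.Monic.coeff_eq_coeff_X_pow {R : Type*} [Semiring R] {f : R[X]} (hf : f.Monic)
    {l : ℕ} (hl : f.natDegree ≤ l) : f.coeff l = (X ^ f.natDegree : R[X]).coeff l := by
  rcases hl.eq_or_lt with rfl | hl
  · rw [hf.coeff_natDegree, coeff_X_pow_self]
  · rw [coeff_eq_zero_of_natDegree_lt hl, coeff_X_pow, if_neg hl.ne']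

section Moments

variable {p : ℕ}

lemma momPair_eq_sum_range (m : ℕ → Matrix (Fin p) (Fin p) ℝ)
    {f : Polynomial (Matrix (Fin p) (Fin p) ℝ)} {N : ℕ} (h : f.natDegree < N) (k : ℕ) :
    momPair m f k = ∑ i ∈ range N, f.coeff i * m (i + k) := by
  refine sum_subset (fun i hi => ?_) fun i _ hi => ?_
  · simp only [mem_range] at hi ⊢
    omega
  · simp only [mem_range, not_lt] at hi
    rw [coeff_eq_zero_of_natDegree_lt (by omega), zero_mul]

lemma eq_zero_of_sum_mul_moment_eq_zero {m : ℕ → Matrix (Fin p) (Fin p) ℝ}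
    {P : ℕ → Polynomial (Matrix (Fin p) (Fin p) ℝ)}
    (hmonic : ∀ n, (P n).Monic ∧ (P n).natDegree = n)
    (horth : ∀ n, ∀ k < n, momPair m (P n) k = 0) (hH : ∀ n, IsUnit (momPair m (P n) n)) :
    ∀ N (c : ℕ → Matrix (Fin p) (Fin p) ℝ),
      (∀ k < N, ∑ i ∈ range N, c i * m (i + k) = 0) → ∀ k < N, c k = 0 := by
  intro N
  induction N with
  | zero => exact fun _ _ k hk => absurd hk k.not_lt_zero
  | succ N ih =>
    intro c hc
    have hdeg : (P N).natDegree = N := (hmonic N).2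
    have hlead : (P N).coeff N = 1 := by rw [← (hmonic N).1.coeff_natDegree, hdeg]
    set c' := fun i => c i - c N * (P N).coeff i
    have hsum : ∀ k, ∑ i ∈ range (N + 1), c' i * m (i + k)
        = ∑ i ∈ range (N + 1), c i * m (i + k) - c N * momPair m (P N) k := by
      intro k
      rw [momPair_eq_sum_range m (by omega : (P N).natDegree < N + 1), mul_sum,
        ← sum_sub_distrib]
      simp only [c', sub_mul, mul_assoc]
    have hc'N : c' N = 0 := by simp only [c', hlead, mul_one, sub_self]
    have hc'_lt : ∀ i < N, c' i = 0 := by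
      refine ih c' fun k hk => ?_
      have h := hsum k
      rwa [hc k (by omega), horth N k hk, mul_zero, sub_zero, sum_range_succ, hc'N, zero_mul,
        add_zero] at h
    have hc'_zero : ∀ i < N + 1, c' i = 0 := fun i hi =>
      (Nat.lt_succ_iff_lt_or_eq.mp hi).elim (hc'_lt i) (· ▸ hc'N)
    have hcN : c N = 0 := by
      have h := hsum N
      rw [sum_eq_zero fun i hi => by rw [hc'_zero i (mem_range.mp hi), zero_mul],
        hc N N.lt_succ_self, zero_sub, zero_eq_neg] at h
      exact (hH N).mul_left_eq_zero.mp h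
    intro k hk
    simpa [c', hcN] using hc'_zero k hk

end Moments

section Derivatives

variable {p : ℕ} {m : ℝ → ℕ → Matrix (Fin p) (Fin p) ℝ} {t : ℝ}

lemma hasDerivAt_momPair_apply (hmom : ∀ k i j, HasDerivAt (fun s => m s k i j) (m t (k + 1) i j) t)
    {f : ℝ → Polynomial (Matrix (Fin p) (Fin p) ℝ)} {N : ℕ} (hdeg : ∀ s, (f s).natDegree < N)
    (hdiff : ∀ l i j, DifferentiableAt ℝ (fun s => (f s).coeff l i j) t) (k : ℕ) (i j : Fin p) :
    HasDerivAt (fun s => momPair (m s) (f s) k i j)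
      ((∑ l ∈ range N, matDeriv (fun s => (f s).coeff l) t * m t (l + k)
        + momPair (m t) (f t) (k + 1)) i j) t := by
  simp_rw [momPair_eq_sum_range _ (hdeg _), Matrix.add_apply, Matrix.sum_apply, mul_apply, ← sum_add_distrib,
    ← add_assoc]
  refine HasDerivAt.fun_sum fun l _ => HasDerivAt.fun_sum fun a _ => ?_
  exact (hdiff l i a).hasDerivAt.mul (hmom (l + k) a j)

lemma sum_matDeriv_mul_add_momPair_eq_zero
    (hmom : ∀ k i j, HasDerivAt (fun s => m s k i j) (m t (k + 1) i j) t)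
    {f : ℝ → Polynomial (Matrix (Fin p) (Fin p) ℝ)} {N : ℕ} (hdeg : ∀ s, (f s).natDegree < N)
    (hdiff : ∀ l i j, DifferentiableAt ℝ (fun s => (f s).coeff l i j) t) {k : ℕ}
    (horth : ∀ s, momPair (m s) (f s) k = 0) :
    ∑ l ∈ range N, matDeriv (fun s => (f s).coeff l) t * m t (l + k)
      + momPair (m t) (f t) (k + 1) = 0 := by
  ext i j
  have h := hasDerivAt_momPair_apply hmom hdeg hdiff k i j
  simp only [horth, Matrix.zero_apply] at h
  exact h.unique (hasDerivAt_const t 0)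

end Derivatives

section TimeEvolution

variable {p : ℕ} {m : ℝ → ℕ → Matrix (Fin p) (Fin p) ℝ}
  {P : ℝ → ℕ → Polynomial (Matrix (Fin p) (Fin p) ℝ)}

lemma matDeriv_coeff_eq_zero_of_le (hmonic : ∀ t n, (P t n).Monic ∧ (P t n).natDegree = n)
    {n l : ℕ} (hl : n ≤ l) (t : ℝ) : matDeriv (fun s => (P s n).coeff l) t = 0 := by
  have hconst : (fun s => (P s n).coeff l) = fun _ => (X ^ n : Polynomial _).coeff l := by
    funext s
    obtain ⟨hmon, hdeg⟩ := hmonic s n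
    rw [hmon.coeff_eq_coeff_X_pow (hdeg.symm ▸ hl), hdeg]
  rw [hconst, matDeriv_const]

lemma matDeriv_coeff_eq_neg_mul_coeff {t : ℝ}
    (hmom : ∀ k i j, HasDerivAt (fun s => m s k i j) (m t (k + 1) i j) t)
    (hmonic : ∀ t n, (P t n).Monic ∧ (P t n).natDegree = n)
    (horth : ∀ t n, ∀ k < n, momPair (m t) (P t n) k = 0)
    (hH : ∀ t n, IsUnit (momPair (m t) (P t n) n))
    (hdiff : ∀ n k i j, DifferentiableAt ℝ (fun s => (P s n).coeff k i j) t)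
    {n : ℕ} (hn : 1 ≤ n) (l : ℕ) :
    matDeriv (fun s => (P s n).coeff l) t = -(momPair (m t) (P t n) n *
      Ring.inverse (momPair (m t) (P t (n - 1)) (n - 1))) * (P t (n - 1)).coeff l := by
  set b := momPair (m t) (P t n) n * Ring.inverse (momPair (m t) (P t (n - 1)) (n - 1))
  set D := fun l => matDeriv (fun s => (P s n).coeff l) t
  have hdeg : ∀ s N, (P s N).natDegree = N := fun s N => (hmonic s N).2
  have hb : ∀ k < n, b * momPair (m t) (P t (n - 1)) k = momPair (m t) (P t n) (k + 1) := by
    intro k hk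
    rcases (Nat.lt_or_ge (k + 1) n) with hk' | hk'
    · rw [horth t n (k + 1) hk', horth t (n - 1) k (by omega), mul_zero]
    · obtain rfl : k = n - 1 := by omega
      rw [Nat.sub_add_cancel hn, mul_assoc, Ring.inverse_mul_cancel _ (hH t (n - 1)), mul_one]
  have hc : ∀ k < n, ∑ l ∈ range n, (D l + b * (P t (n - 1)).coeff l) * m t (l + k) = 0 := by
    intro k hk
    have h := sum_matDeriv_mul_add_momPair_eq_zero hmom (N := n + 1)
      (fun s => by rw [hdeg]; omega) (hdiff n) (fun s => horth s n k hk)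
    rw [sum_range_succ, matDeriv_coeff_eq_zero_of_le hmonic le_rfl, zero_mul, add_zero, ← hb k hk,
      momPair_eq_sum_range _ (N := n) (by rw [hdeg]; omega), mul_sum, ← sum_add_distrib] at h
    simpa only [add_mul, mul_assoc] using h
  rcases lt_or_ge l n with hl | hl
  · rw [neg_mul]
    exact eq_neg_of_add_eq_zero_left <|
      eq_zero_of_sum_mul_moment_eq_zero (hmonic t) (horth t) (hH t) n _ hc l hl
  · rw [matDeriv_coeff_eq_zero_of_le hmonic hl, coeff_eq_zero_of_natDegree_lt (by rw [hdeg]; omega), mul_zero]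

end TimeEvolution

theorem stmt5_general {p : ℕ} (m : ℝ → ℕ → Matrix (Fin p) (Fin p) ℝ)
    (hmom : ∀ k t i j, HasDerivAt (fun s => m s k i j) (m t (k + 1) i j) t)
    (P : ℝ → ℕ → Polynomial (Matrix (Fin p) (Fin p) ℝ))
    (hmonic : ∀ t n, (P t n).Monic ∧ (P t n).natDegree = n)
    (horth : ∀ t n, ∀ k < n, momPair (m t) (P t n) k = 0)
    (hH : ∀ t n, IsUnit (momPair (m t) (P t n) n))
    (hdiff : ∀ n k i j t, DifferentiableAt ℝ (fun s => (P s n).coeff k i j) t) :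
    ∀ n : ℕ, 1 ≤ n → ∀ t k i j,
      deriv (fun s => (P s n).coeff k i j) t =
        ((-(momPair (m t) (P t n) n *
            Ring.inverse (momPair (m t) (P t (n - 1)) (n - 1)))) *
          (P t (n - 1)).coeff k) i j :=
  fun _ hn t k i j => congrFun₂ (matDeriv_coeff_eq_neg_mul_coeff (hmom · t) hmonic horth hH
    (fun n k i j => hdiff n k i j t) hn k) i j

/-- Time evolution of monic matrix orthogonal polynomials for a symmetric measure with
`∂_t dμ = x dμ` (i.e. `∂_t m_k = m_{k+1}` for the moments): `∂_t P_n = -b_n P_{n-1}`,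
where `b_n = H_n H_{n-1}⁻¹` and `H_n(t) = ∫ P_n(x;t) dμ(x;t) x^n` is invertible. -/
theorem stmt5 {p : ℕ} (m : ℝ → ℕ → Matrix (Fin p) (Fin p) ℝ)
    (hsym : ∀ t k, (m t k)ᵀ = m t k)
    (hmom : ∀ k t i j, HasDerivAt (fun s => m s k i j) (m t (k + 1) i j) t)
    (P : ℝ → ℕ → Polynomial (Matrix (Fin p) (Fin p) ℝ))
    (hmonic : ∀ t n, (P t n).Monic ∧ (P t n).natDegree = n)
    (horth : ∀ t n, ∀ k < n, momPair (m t) (P t n) k = 0)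
    (hH : ∀ t n, IsUnit (momPair (m t) (P t n) n))
    (hdiff : ∀ n k i j t, DifferentiableAt ℝ (fun s => (P s n).coeff k i j) t) :
    ∀ n : ℕ, 1 ≤ n → ∀ t k i j,
      deriv (fun s => (P s n).coeff k i j) t =
        ((-(momPair (m t) (P t n) n *
            Ring.inverse (momPair (m t) (P t (n - 1)) (n - 1)))) *
          (P t (n - 1)).coeff k) i j :=
  stmt5_general m hmom P hmonic horth hH hdiff
end

section
/- Let dμ(x;t) = exp(Σ_k t_k x^k) dμ(x) with dμ symmetric, let P_n(x;t) be the monic matrix orthogonal polynomials and H_n invertible. Then the t_2-evolution is ∂_{t_2} P_n = -(a_n b_n + b_n a_{n-1}) P_{n-1} - b_n b_{n-1} P_{n-2}, where a_n, b_n are the three-term recurrence coefficients. -/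
open Polynomial Finset Matrix

/-- `⟨f, x^k⟩ = Σ_i f_i m_{i+k}` in terms of moments. -/
noncomputable def momPair8 {p : ℕ} (m : ℕ → Matrix (Fin p) (Fin p) ℝ)
    (f : Polynomial (Matrix (Fin p) (Fin p) ℝ)) (k : ℕ) : Matrix (Fin p) (Fin p) ℝ :=
  ∑ i ∈ range (f.natDegree + 1), f.coeff i * m (i + k)

/-!
Differentiating the orthogonality relations `⟨P_n, x^k⟩ = 0` (`k < n`) along the flow
`∂ m_k = m_{k+2}` gives `⟨∂P_n, x^k⟩ = -⟨x² P_n, x^k⟩`. Expanding `x² P_n` with the three-term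
recurrence twice, only the `P_{n-1}` and `P_{n-2}` terms survive the pairing with `x^k`, `k < n`.
So `∂P_n + (a_n b_n + b_n a_{n-1}) P_{n-1} + b_n b_{n-1} P_{n-2}` has degree `< n`
(the leading coefficient of `P_n` is constantly `1`) and is orthogonal to `1, …, x^{n-1}`;
since the `H_j` are invertible, such a polynomial vanishes.
-/

section
variable {p : ℕ}
local notation "M" => Matrix (Fin p) (Fin p) ℝ

theorem momPair8_eq_sum_range (m : ℕ → M) {f : M[X]} {N : ℕ} (hN : f.natDegree < N) (k : ℕ) :
    momPair8 m f k = ∑ i ∈ range N, f.coeff i * m (i + k) :=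
  sum_subset (range_subset_range.2 hN) fun i _ hi => by
    rw [coeff_eq_zero_of_natDegree_lt (by simpa using hi), zero_mul]

theorem momPair8_add (m : ℕ → M) (f g : M[X]) (k : ℕ) :
    momPair8 m (f + g) k = momPair8 m f k + momPair8 m g k := by
  set N := max f.natDegree g.natDegree + 1
  have hf : f.natDegree < N := by omega
  have hg : g.natDegree < N := by omega
  have hfg : (f + g).natDegree < N := (natDegree_add_le f g).trans_lt (by omega)
  rw [momPair8_eq_sum_range m hfg, momPair8_eq_sum_range m hf, momPair8_eq_sum_range m hg,
    ← sum_add_distrib]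
  simp only [coeff_add, add_mul]

theorem momPair8_C_mul (m : ℕ → M) (c : M) (f : M[X]) (k : ℕ) :
    momPair8 m (C c * f) k = c * momPair8 m f k := by
  rw [momPair8_eq_sum_range m ((natDegree_C_mul_le c f).trans_lt f.natDegree.lt_succ_self),
    momPair8, mul_sum]
  simp only [coeff_C_mul, mul_assoc]

theorem momPair8_X_mul (m : ℕ → M) (f : M[X]) (k : ℕ) :
    momPair8 m (X * f) k = momPair8 m f (k + 1) := by
  have hdeg : (X * f).natDegree < f.natDegree + 2 := by
    have := natDegree_mul_le (p := (X : M[X])) (q := f)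
    have := natDegree_X_le (R := M)
    omega
  rw [momPair8_eq_sum_range m hdeg, sum_range_succ', momPair8]
  simp only [coeff_X_mul, coeff_X_mul_zero, zero_mul, add_zero, add_right_comm _ 1 k, add_assoc]

theorem momPair8_sub (m : ℕ → M) (f g : M[X]) (k : ℕ) :
    momPair8 m (f - g) k = momPair8 m f k - momPair8 m g k := by
  rw [eq_sub_iff_add_eq, ← momPair8_add, sub_add_cancel]

theorem eq_zero_of_momPair8_eq_zero {m : ℕ → M} {P : ℤ → M[X]}
    (hmonic : ∀ n : ℤ, 0 ≤ n → (P n).Monic ∧ ((P n).natDegree : ℤ) = n)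
    (horth : ∀ n : ℤ, 0 ≤ n → ∀ k < n.toNat, momPair8 m (P n) k = 0)
    (hH : ∀ n : ℤ, 0 ≤ n → IsUnit (momPair8 m (P n) n.toNat))
    {d : ℕ} {f : M[X]} (hdeg : f.degree < d) (hf : ∀ k < d, momPair8 m f k = 0) : f = 0 := by
  induction d generalizing f with
  | zero => simpa using hdeg
  | succ d ih =>
    obtain ⟨hmon, hdegd⟩ := hmonic d d.cast_nonneg
    replace hdegd : (P d).natDegree = d := by exact_mod_cast hdegd
    have horthd : ∀ k < d, momPair8 m (P d) k = 0 := by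
      simpa using horth d d.cast_nonneg
    set c := f.coeff d
    have hlow : f - C c * P d = 0 := by
      refine ih ((degree_lt_iff_coeff_zero _ _).2 fun k hk => ?_) fun k hk => ?_
      · rw [coeff_sub, coeff_C_mul]
        rcases hk.eq_or_lt with rfl | hlt
        · rw [show (P d).coeff d = 1 by simpa [hdegd] using hmon.coeff_natDegree, mul_one,
            sub_self]
        · rw [(degree_lt_iff_coeff_zero _ _).1 hdeg k hlt,
            coeff_eq_zero_of_natDegree_lt (by omega), mul_zero, sub_zero]
      · rw [momPair8_sub, momPair8_C_mul, hf k (by omega), horthd k hk, mul_zero, sub_zero]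
    have hc : c = 0 := by
      have hHd : IsUnit (momPair8 m (P d) d) := by simpa using hH d d.cast_nonneg
      rw [← hHd.mul_left_eq_zero, ← momPair8_C_mul, ← sub_eq_zero.1 hlow]
      exact hf d d.lt_succ_self
    rw [sub_eq_zero.1 hlow, hc, C_0, zero_mul]

theorem coeff_eq_zero_of_index_lt {P : ℤ → M[X]} (hneg : ∀ n, n < 0 → P n = 0)
    (hmonic : ∀ n : ℤ, 0 ≤ n → (P n).Monic ∧ ((P n).natDegree : ℤ) = n)
    {n : ℤ} {k : ℕ} (hk : n < k) : (P n).coeff k = 0 := by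
  rcases lt_or_ge n 0 with hn | hn
  · rw [hneg n hn, coeff_zero]
  · exact coeff_eq_zero_of_natDegree_lt (by have := (hmonic n hn).2; omega)

noncomputable def coeffDeriv (P : ℝ → M[X]) (N : ℕ) (t : ℝ) : M[X] :=
  ∑ k ∈ range (N + 1), monomial k (Matrix.of fun i j => deriv (fun s => (P s).coeff k i j) t)

theorem coeff_coeffDeriv (P : ℝ → M[X]) (N : ℕ) (t : ℝ) (k : ℕ) :
    (coeffDeriv P N t).coeff k =
      if k ≤ N then Matrix.of fun i j => deriv (fun s => (P s).coeff k i j) t else 0 := by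
  simp [coeffDeriv, finsetSum_coeff, coeff_monomial]

theorem natDegree_coeffDeriv_lt (P : ℝ → M[X]) (N : ℕ) (t : ℝ) :
    (coeffDeriv P N t).natDegree < N + 1 :=
  Nat.lt_succ_of_le <| natDegree_le_iff_coeff_eq_zero.2 fun k hk => by
    rw [coeff_coeffDeriv, if_neg (by exact_mod_cast hk.not_ge)]

theorem coeffDeriv_coeff_apply {P : ℝ → M[X]} {N : ℕ} (hdeg : ∀ s, (P s).natDegree ≤ N)
    (t : ℝ) (k : ℕ) (i j : Fin p) :
    (coeffDeriv P N t).coeff k i j = deriv (fun s => (P s).coeff k i j) t := by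
  rw [coeff_coeffDeriv]
  split_ifs with hk
  · rfl
  · have hzero : (fun s => (P s).coeff k i j) = fun _ => 0 := funext fun s => by
      rw [coeff_eq_zero_of_natDegree_lt ((hdeg s).trans_lt (not_le.1 hk))]; rfl
    rw [hzero, deriv_const]; rfl

theorem coeffDeriv_coeff_eq_zero_of_monic {P : ℝ → M[X]} {N : ℕ} (hmon : ∀ s, (P s).Monic)
    (hdeg : ∀ s, (P s).natDegree = N) (t : ℝ) {k : ℕ} (hk : N ≤ k) :
    (coeffDeriv P N t).coeff k = 0 := by
  have hconst : ∀ s, (P s).coeff k = if k = N then 1 else 0 := fun s => by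
    split_ifs with h
    · rw [h, ← hdeg s, (hmon s).coeff_natDegree]
    · exact coeff_eq_zero_of_natDegree_lt (by have := hdeg s; omega)
  ext i j
  simp_rw [coeffDeriv_coeff_apply (fun s => (hdeg s).le), hconst, deriv_const, Matrix.zero_apply]

theorem hasDerivAt_momPair8 {m : ℝ → ℕ → M} {r : ℕ} {t : ℝ}
    (hmom : ∀ k i j, HasDerivAt (fun s => m s k i j) (m t (k + r) i j) t)
    {P : ℝ → M[X]} {N : ℕ} (hdeg : ∀ s, (P s).natDegree ≤ N)
    (hdiff : ∀ l i j, DifferentiableAt ℝ (fun s => (P s).coeff l i j) t) (k : ℕ) (i j : Fin p) :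
    HasDerivAt (fun s => momPair8 (m s) (P s) k i j)
      ((momPair8 (m t) (coeffDeriv P N t) k + momPair8 (m t) (P t) (k + r)) i j) t := by
  have hexpand : ∀ (f : M[X]) (k' : ℕ) (m' : ℕ → M), f.natDegree < N + 1 →
      momPair8 m' f k' i j = ∑ l ∈ range (N + 1), ∑ q, f.coeff l i q * m' (l + k') q j :=
    fun f k' m' hf => by simp [momPair8_eq_sum_range m' hf, Matrix.sum_apply, Matrix.mul_apply]
  have hlt : ∀ s, (P s).natDegree < N + 1 := fun s => Nat.lt_succ_of_le (hdeg s)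
  rw [funext fun s => hexpand _ _ _ (hlt s), Matrix.add_apply,
    hexpand _ _ _ (natDegree_coeffDeriv_lt P N t), hexpand _ _ _ (hlt t)]
  refine (HasDerivAt.fun_sum fun l _ => HasDerivAt.fun_sum fun q _ =>
    (hdiff l i q).hasDerivAt.mul (hmom (l + k) q j)).congr_deriv ?_
  simp_rw [← sum_add_distrib, coeffDeriv_coeff_apply hdeg, add_assoc]

theorem momPair8_coeffDeriv_of_forall_eq_zero {m : ℝ → ℕ → M} {r : ℕ} {t : ℝ}
    (hmom : ∀ k i j, HasDerivAt (fun s => m s k i j) (m t (k + r) i j) t)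
    {P : ℝ → M[X]} {N : ℕ} (hdeg : ∀ s, (P s).natDegree ≤ N)
    (hdiff : ∀ l i j, DifferentiableAt ℝ (fun s => (P s).coeff l i j) t) {k : ℕ}
    (horth : ∀ s, momPair8 (m s) (P s) k = 0) :
    momPair8 (m t) (coeffDeriv P N t) k = -momPair8 (m t) (P t) (k + r) := by
  refine eq_neg_of_add_eq_zero_left (ext fun i j => ?_)
  have hd := hasDerivAt_momPair8 hmom hdeg hdiff k i j
  simp_rw [horth, Matrix.zero_apply] at hd
  exact hd.unique (hasDerivAt_const t 0)

theorem momPair8_X_mul_of_recurrence {m : ℕ → M} {P : ℤ → M[X]} {a b : ℤ → M}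
    (horth : ∀ n : ℤ, 0 ≤ n → ∀ k < n.toNat, momPair8 m (P n) k = 0)
    (hrec : ∀ n : ℤ, 0 ≤ n → X * P n = P (n + 1) + C (a n) * P n + C (b n) * P (n - 1))
    {l : ℤ} (hl : 0 ≤ l) {k : ℕ} (hk : (k : ℤ) ≤ l) :
    momPair8 m (X * P l) k = a l * momPair8 m (P l) k + b l * momPair8 m (P (l - 1)) k := by
  rw [hrec l hl, momPair8_add, momPair8_add, momPair8_C_mul, momPair8_C_mul,
    horth (l + 1) (by omega) k (by omega), zero_add]

theorem momPair8_add_two_of_recurrence {m : ℕ → M} {P : ℤ → M[X]} {a b : ℤ → M}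
    (horth : ∀ n : ℤ, 0 ≤ n → ∀ k < n.toNat, momPair8 m (P n) k = 0)
    (hrec : ∀ n : ℤ, 0 ≤ n → X * P n = P (n + 1) + C (a n) * P n + C (b n) * P (n - 1))
    {n : ℤ} {k : ℕ} (hk : (k : ℤ) < n) :
    momPair8 m (P n) (k + 2) = (a n * b n + b n * a (n - 1)) * momPair8 m (P (n - 1)) k
      + b n * b (n - 1) * momPair8 m (P (n - 2)) k := by
  have hX : X * (X * P n) = X * P (n + 1) + C (a n) * (X * P n) + C (b n) * (X * P (n - 1)) := by
    conv_lhs => rw [hrec n (by omega)]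
    rw [mul_add, mul_add, (commute_X (C (a n))).left_comm, (commute_X (C (b n))).left_comm]
  rw [← momPair8_X_mul, ← momPair8_X_mul, hX, momPair8_add, momPair8_add, momPair8_C_mul,
    momPair8_C_mul, momPair8_X_mul m (P (n + 1)), horth (n + 1) (by omega) (k + 1) (by omega),
    momPair8_X_mul_of_recurrence horth hrec (l := n) (by omega) hk.le,
    momPair8_X_mul_of_recurrence horth hrec (l := n - 1) (by omega) (by omega),
    horth n (by omega) k (by omega), show n - 1 - 1 = n - 2 by omega]
  noncomm_ring

end

theorem stmt8_general {p : ℕ} (m : ℝ → ℕ → Matrix (Fin p) (Fin p) ℝ)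
    (hmom : ∀ k t i j, HasDerivAt (fun s => m s k i j) (m t (k + 2) i j) t)
    (P : ℝ → ℤ → Polynomial (Matrix (Fin p) (Fin p) ℝ))
    (a b : ℤ → ℝ → Matrix (Fin p) (Fin p) ℝ)
    (hneg : ∀ t n, n < 0 → P t n = 0)
    (hmonic : ∀ t (n : ℤ), 0 ≤ n → (P t n).Monic ∧ ((P t n).natDegree : ℤ) = n)
    (horth : ∀ t (n : ℤ), 0 ≤ n → ∀ k < n.toNat, momPair8 (m t) (P t n) k = 0)
    (hH : ∀ t (n : ℤ), 0 ≤ n → IsUnit (momPair8 (m t) (P t n) n.toNat))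
    (hrec : ∀ t (n : ℤ), 0 ≤ n →
      X * P t n = P t (n + 1) + C (a n t) * P t n + C (b n t) * P t (n - 1))
    (hdiff : ∀ (n : ℤ) k i j t, DifferentiableAt ℝ (fun s => (P s n).coeff k i j) t) :
    ∀ (n : ℤ) t, 0 ≤ n → ∀ k i j,
      deriv (fun s => (P s n).coeff k i j) t =
        ((-(a n t * b n t + b n t * a (n - 1) t)) * (P t (n - 1)).coeff k
          - b n t * b (n - 1) t * (P t (n - 2)).coeff k) i j := by
  intro n t hn k i j
  lift n to ℕ using hn
  have hdeg : ∀ s, (P s n).natDegree = n := fun s => by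
    exact_mod_cast (hmonic s n n.cast_nonneg).2
  set c₁ := a n t * b n t + b n t * a (n - 1) t
  set c₂ := b n t * b (n - 1) t
  have hzero : coeffDeriv (P · n) n t + C c₁ * P t (n - 1) + C c₂ * P t (n - 2) = 0 := by
    refine eq_zero_of_momPair8_eq_zero (hmonic t) (horth t) (hH t) (d := n)
      ((degree_lt_iff_coeff_zero _ _).2 fun l hl => ?_) fun l hl => ?_
    · rw [coeff_add, coeff_add, coeff_C_mul, coeff_C_mul,
        coeffDeriv_coeff_eq_zero_of_monic (fun s => (hmonic s n n.cast_nonneg).1) hdeg t hl,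
        coeff_eq_zero_of_index_lt (hneg t) (hmonic t) (by omega),
        coeff_eq_zero_of_index_lt (hneg t) (hmonic t) (by omega)]
      simp
    · have hl' : (l : ℤ) < n := by exact_mod_cast hl
      rw [momPair8_add, momPair8_add, momPair8_C_mul, momPair8_C_mul,
        momPair8_coeffDeriv_of_forall_eq_zero (hmom · t) (fun s => (hdeg s).le) (hdiff n · · · t)
          fun s => horth s n n.cast_nonneg l (by simpa using hl),
        momPair8_add_two_of_recurrence (a := (a · t)) (b := (b · t)) (horth t) (hrec t) hl']
      abel
  have hcoeff := congrArg (fun f => (f.coeff k) i j) hzero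
  simp only [coeff_add, coeff_C_mul, coeff_zero, Matrix.add_apply, Matrix.zero_apply] at hcoeff
  rw [← coeffDeriv_coeff_apply (fun s => (hdeg s).le), Matrix.sub_apply, neg_mul, Matrix.neg_apply]
  linarith

/-- For `dμ(x;t) = exp(Σ_k t_k x^k) dμ(x)` the `t₂`-flow satisfies `∂_{t₂} m_k = m_{k+2}`
on moments, and the monic matrix orthogonal polynomials evolve as
`∂_{t₂} P_n = -(a_n b_n + b_n a_{n-1}) P_{n-1} - b_n b_{n-1} P_{n-2}`,
where `a_n, b_n` are the three-term recurrence coefficients, `b_n = H_n H_{n-1}⁻¹`,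
with the conventions `P_{-1} = P_{-2} = 0` (polynomials indexed by `ℤ`, vanishing for
negative index). Derivatives of matrix entries are taken entrywise in `t₂`. -/
theorem stmt8 {p : ℕ} (m : ℝ → ℕ → Matrix (Fin p) (Fin p) ℝ)
    (hsym : ∀ t k, (m t k)ᵀ = m t k)
    (hmom : ∀ k t i j, HasDerivAt (fun s => m s k i j) (m t (k + 2) i j) t)
    (P : ℝ → ℤ → Polynomial (Matrix (Fin p) (Fin p) ℝ))
    (a b : ℤ → ℝ → Matrix (Fin p) (Fin p) ℝ)
    (hneg : ∀ t n, n < 0 → P t n = 0)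
    (hmonic : ∀ t (n : ℤ), 0 ≤ n → (P t n).Monic ∧ ((P t n).natDegree : ℤ) = n)
    (horth : ∀ t (n : ℤ), 0 ≤ n → ∀ k < n.toNat, momPair8 (m t) (P t n) k = 0)
    (hH : ∀ t (n : ℤ), 0 ≤ n → IsUnit (momPair8 (m t) (P t n) n.toNat))
    (hrec : ∀ t (n : ℤ), 0 ≤ n →
      X * P t n = P t (n + 1) + C (a n t) * P t n + C (b n t) * P t (n - 1))
    (hb : ∀ (n : ℤ) t, 1 ≤ n →
      b n t = momPair8 (m t) (P t n) n.toNat *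
        Ring.inverse (momPair8 (m t) (P t (n - 1)) (n - 1).toNat))
    (hdiff : ∀ (n : ℤ) k i j t, DifferentiableAt ℝ (fun s => (P s n).coeff k i j) t) :
    ∀ (n : ℤ) t, 0 ≤ n → ∀ k i j,
      deriv (fun s => (P s n).coeff k i j) t =
        ((-(a n t * b n t + b n t * a (n - 1) t)) * (P t (n - 1)).coeff k
          - b n t * b (n - 1) t * (P t (n - 2)).coeff k) i j :=
  stmt8_general m hmom P a b hneg hmonic horth hH hrec hdiff
end

section
/- Suppose matrix sequences a_n(t), b_n(t) satisfy the compatibility of x P_n = P_{n+1} + a_n P_n + b_n P_{n-1} with ∂_{t_2} P_n = -(a_n b_n + b_n a_{n-1}) P_{n-1} - b_n b_{n-1} P_{n-2}. Then ∂_{t_2} a_n = a_{n+1} b_{n+1} + b_{n+1} a_n - a_n b_n - b_n a_{n-1} and ∂_{t_2} b_n = a_n^2 b_n - b_n a_{n-1}^2 + b_{n+1} b_n - b_n b_{n-1}. -/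
/-!
Differentiating `x P_n = P_{n+1} + a_n P_n + b_n P_{n-1}` in `t₂` and substituting the given
evolution of the `P_k` gives an identity between polynomials; expanding `x P_{n-1}` and
`x P_{n-2}` once more by the recurrence writes both sides as left combinations of
`P_n, P_{n-1}, P_{n-2}, P_{n-3}`. Since `P_k` is monic of degree `k`, the coefficients of
`x^n` and `x^{n-1}` give the equations for `∂a_n` and `∂b_n`; in the second one the unknown
subleading coefficient of `P_n` is multiplied by the first equation and drops out.
-/

open Polynomial

section EntrywiseDeriv

variable {𝕜 l m n : Type*} [NontriviallyNormedField 𝕜]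

def HasEntrywiseDerivAt (f : 𝕜 → Matrix m n 𝕜) (f' : Matrix m n 𝕜) (t : 𝕜) : Prop :=
  ∀ i j, HasDerivAt (fun s => f s i j) (f' i j) t

variable {f g : 𝕜 → Matrix m n 𝕜} {f' g' : Matrix m n 𝕜} {t : 𝕜}

theorem hasEntrywiseDerivAt_const (c : Matrix m n 𝕜) (t : 𝕜) :
    HasEntrywiseDerivAt (fun _ => c) 0 t :=
  fun i j => hasDerivAt_const t (c i j)

theorem HasEntrywiseDerivAt.unique (hf : HasEntrywiseDerivAt f f' t)
    (hg : HasEntrywiseDerivAt f g' t) : f' = g' :=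
  Matrix.ext fun i j => (hf i j).unique (hg i j)

theorem HasEntrywiseDerivAt.add (hf : HasEntrywiseDerivAt f f' t)
    (hg : HasEntrywiseDerivAt g g' t) :
    HasEntrywiseDerivAt (fun s => f s + g s) (f' + g') t :=
  fun i j => (hf i j).add (hg i j)

theorem HasEntrywiseDerivAt.mul [Fintype m] {f : 𝕜 → Matrix l m 𝕜} {f' : Matrix l m 𝕜}
    (hf : HasEntrywiseDerivAt f f' t) (hg : HasEntrywiseDerivAt g g' t) :
    HasEntrywiseDerivAt (fun s => f s * g s) (f' * g t + f t * g') t := by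
  intro i j
  simp only [Matrix.mul_apply, Matrix.add_apply, ← Finset.sum_add_distrib]
  exact HasDerivAt.fun_sum fun x _ => (hf i x).mul (hg x j)

end EntrywiseDeriv

section CoeffDeriv

variable {𝕜 n : Type*} [NontriviallyNormedField 𝕜] [Fintype n] [DecidableEq n]

def HasCoeffDerivAt (Q : 𝕜 → (Matrix n n 𝕜)[X]) (Q' : (Matrix n n 𝕜)[X]) (t : 𝕜) : Prop :=
  ∀ k, HasEntrywiseDerivAt (fun s => (Q s).coeff k) (Q'.coeff k) t

variable {f : 𝕜 → Matrix n n 𝕜} {f' : Matrix n n 𝕜} {Q R : 𝕜 → (Matrix n n 𝕜)[X]}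
  {Q' R' : (Matrix n n 𝕜)[X]} {t : 𝕜}

theorem hasCoeffDerivAt_const (c : (Matrix n n 𝕜)[X]) (t : 𝕜) :
    HasCoeffDerivAt (fun _ => c) 0 t :=
  fun k => by simpa only [coeff_zero] using hasEntrywiseDerivAt_const (c.coeff k) t

theorem HasCoeffDerivAt.unique (hQ : HasCoeffDerivAt Q Q' t) (hR : HasCoeffDerivAt Q R' t) :
    Q' = R' :=
  Polynomial.ext fun k => (hQ k).unique (hR k)

theorem HasCoeffDerivAt.add (hQ : HasCoeffDerivAt Q Q' t) (hR : HasCoeffDerivAt R R' t) :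
    HasCoeffDerivAt (fun s => Q s + R s) (Q' + R') t :=
  fun k => by simpa only [coeff_add] using (hQ k).add (hR k)

theorem HasCoeffDerivAt.C_mul (hf : HasEntrywiseDerivAt f f' t) (hQ : HasCoeffDerivAt Q Q' t) :
    HasCoeffDerivAt (fun s => C (f s) * Q s) (C f' * Q t + C (f t) * Q') t :=
  fun k => by simpa only [coeff_add, coeff_C_mul] using hf.mul (hQ k)

theorem HasCoeffDerivAt.X_mul (hQ : HasCoeffDerivAt Q Q' t) :
    HasCoeffDerivAt (fun s => X * Q s) (X * Q') t := by
  rintro (_ | k)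
  · simpa only [coeff_X_mul_zero] using hasEntrywiseDerivAt_const (0 : Matrix n n 𝕜) t
  · simpa only [coeff_X_mul] using hQ k

theorem X_mul_eq_of_hasCoeffDerivAt_threeTerm {Q₀ Q₁ Q₂ : 𝕜 → (Matrix n n 𝕜)[X]}
    {Q₀' Q₁' Q₂' : (Matrix n n 𝕜)[X]} {g : 𝕜 → Matrix n n 𝕜} {g' : Matrix n n 𝕜}
    (hrec : ∀ s, X * Q₁ s = Q₂ s + C (f s) * Q₁ s + C (g s) * Q₀ s)
    (h₀ : HasCoeffDerivAt Q₀ Q₀' t) (h₁ : HasCoeffDerivAt Q₁ Q₁' t)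
    (h₂ : HasCoeffDerivAt Q₂ Q₂' t) (hf : HasEntrywiseDerivAt f f' t)
    (hg : HasEntrywiseDerivAt g g' t) :
    X * Q₁' = Q₂' + (C f' * Q₁ t + C (f t) * Q₁') + (C g' * Q₀ t + C (g t) * Q₀') :=
  h₁.X_mul.unique (by simpa only [hrec] using (h₂.add (h₁.C_mul hf)).add (h₀.C_mul hg))

end CoeffDeriv

section TodaRecurrence

variable {R : Type*} [Ring R]

structure IsMonicThreeTermRecurrence (P : ℤ → R[X]) (a b : ℤ → R) : Prop where
  eq_zero_of_neg : ∀ n, n < 0 → P n = 0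
  monic : ∀ n, 0 ≤ n → (P n).Monic ∧ ((P n).natDegree : ℤ) = n
  b_eq_zero : ∀ n, n ≤ 0 → b n = 0
  X_mul : ∀ n, 0 ≤ n → X * P n = P (n + 1) + C (a n) * P n + C (b n) * P (n - 1)

/-- The right-hand side `∂_{t₂} P_n` of the evolution of `P_n`. -/
noncomputable def todaFlow (P : ℤ → R[X]) (a b : ℤ → R) (n : ℤ) : R[X] :=
  C (-(a n * b n + b n * a (n - 1))) * P (n - 1) - C (b n * b (n - 1)) * P (n - 2)

namespace IsMonicThreeTermRecurrence

variable {P : ℤ → R[X]} {a b : ℤ → R}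

theorem coeff_eq_zero_of_lt (hP : IsMonicThreeTermRecurrence P a b) {n : ℤ} {k : ℕ}
    (h : n < k) : (P n).coeff k = 0 := by
  rcases lt_or_ge n 0 with hn | hn
  · simp [hP.eq_zero_of_neg n hn]
  · exact coeff_eq_zero_of_natDegree_lt (by have := (hP.monic n hn).2; omega)

theorem coeff_eq_one_of_eq (hP : IsMonicThreeTermRecurrence P a b) {n : ℤ} {k : ℕ}
    (h : n = k) : (P n).coeff k = 1 := by
  obtain ⟨hmonic, hdeg⟩ := hP.monic n (by omega)
  rw [show k = (P n).natDegree by omega]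
  exact hmonic.coeff_natDegree

/-- The recurrence is only available for `m ≥ 0` (at `m = -1` it would say `P_0 = 0`), hence
the factor `c` vanishing for `m < 0`. -/
theorem C_mul_X_mul (hP : IsMonicThreeTermRecurrence P a b) {m n : ℤ} (hmn : m + 1 = n) {c : R}
    (hc : m < 0 → c = 0) :
    C c * (X * P m) = C c * (P n + C (a m) * P m + C (b m) * P (m - 1)) := by
  rcases lt_or_ge m 0 with hm | hm
  · simp [hc hm]
  · rw [hP.X_mul m hm, hmn]

theorem X_mul_todaFlow (hP : IsMonicThreeTermRecurrence P a b) {n : ℤ} (hn : 0 ≤ n) :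
    X * todaFlow P a b n =
      C (-(a n * b n + b n * a (n - 1)))
          * (P n + C (a (n - 1)) * P (n - 1) + C (b (n - 1)) * P (n - 1 - 1))
        - C (b n * b (n - 1))
          * (P (n - 1) + C (a (n - 2)) * P (n - 2) + C (b (n - 2)) * P (n - 2 - 1)) := by
  rw [← hP.C_mul_X_mul (sub_add_cancel n 1), ← hP.C_mul_X_mul (by ring : n - 2 + 1 = n - 1)]
  · simp only [todaFlow, mul_sub, ← mul_assoc, X_mul_C]
  · intro hm
    rcases (by omega : n = 0 ∨ n = 1) with rfl | rfl <;> simp [hP.b_eq_zero]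
  · intro hm
    simp [hP.b_eq_zero n (by omega)]

theorem todaFlow_a_eq (hP : IsMonicThreeTermRecurrence P a b) {n : ℤ} (hn : 0 ≤ n) {a' b' : R}
    (hcompat : X * todaFlow P a b n = todaFlow P a b (n + 1)
      + (C a' * P n + C (a n) * todaFlow P a b n)
      + (C b' * P (n - 1) + C (b n) * todaFlow P a b (n - 1))) :
    a' = a (n + 1) * b (n + 1) + b (n + 1) * a n - a n * b n - b n * a (n - 1) := by
  rw [hP.X_mul_todaFlow hn] at hcompat
  lift n to ℕ using hn
  have h := congrArg (coeff · n) hcompat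
  simp only [todaFlow, coeff_add, coeff_sub, coeff_C_mul] at h
  simp (disch := omega) only [hP.coeff_eq_zero_of_lt, hP.coeff_eq_one_of_eq,
    add_sub_cancel_right, mul_zero, mul_one, add_zero, sub_zero] at h
  rw [eq_sub_of_add_eq' h.symm]
  abel

theorem todaFlow_b_eq (hP : IsMonicThreeTermRecurrence P a b) {n : ℤ} (hn : 0 < n) {a' b' : R}
    (hcompat : X * todaFlow P a b n = todaFlow P a b (n + 1)
      + (C a' * P n + C (a n) * todaFlow P a b n)
      + (C b' * P (n - 1) + C (b n) * todaFlow P a b (n - 1))) :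
    b' = a n * a n * b n - b n * (a (n - 1) * a (n - 1)) + b (n + 1) * b n
      - b n * b (n - 1) := by
  have ha' := hP.todaFlow_a_eq hn.le hcompat
  rw [hP.X_mul_todaFlow hn.le] at hcompat
  obtain ⟨N, rfl⟩ : ∃ N : ℕ, n = N + 1 := ⟨n.toNat - 1, by omega⟩
  have h := congrArg (coeff · N) hcompat
  simp only [todaFlow, coeff_add, coeff_sub, coeff_C_mul] at h
  simp (disch := omega) only [hP.coeff_eq_zero_of_lt, hP.coeff_eq_one_of_eq,
    add_sub_cancel_right, mul_zero, mul_one, add_zero, sub_zero, ha'] at h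
  rw [eq_sub_of_add_eq' h.symm, add_sub_cancel_right]
  noncomm_ring

end IsMonicThreeTermRecurrence

end TodaRecurrence

/-- Compatibility of `x P_n = P_{n+1} + a_n P_n + b_n P_{n-1}` with the `t₂`-evolution
`∂_{t₂} P_n = -(a_n b_n + b_n a_{n-1}) P_{n-1} - b_n b_{n-1} P_{n-2}` yields the second
flow of the non-abelian Toda hierarchy:
`∂_{t₂} a_n = a_{n+1} b_{n+1} + b_{n+1} a_n - a_n b_n - b_n a_{n-1}` and
`∂_{t₂} b_n = a_n² b_n - b_n a_{n-1}² + b_{n+1} b_n - b_n b_{n-1}`.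
Polynomials are indexed by `ℤ`, vanish for negative index (`P_{-1} = P_{-2} = 0`),
are monic of degree `n` for `n ≥ 0`, and `b_n = 0` for `n ≤ 0` (semi-infinite
convention); derivatives of matrix entries are entrywise. -/
theorem stmt9 {p : ℕ}
    (P : ℝ → ℤ → Polynomial (Matrix (Fin p) (Fin p) ℝ))
    (a b a' b' : ℤ → ℝ → Matrix (Fin p) (Fin p) ℝ)
    (hneg : ∀ t n, n < 0 → P t n = 0)
    (hmonic : ∀ t (n : ℤ), 0 ≤ n → (P t n).Monic ∧ ((P t n).natDegree : ℤ) = n)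
    (hb0 : ∀ t (n : ℤ), n ≤ 0 → b n t = 0)
    (hrec : ∀ t (n : ℤ), 0 ≤ n →
      X * P t n = P t (n + 1) + C (a n t) * P t n + C (b n t) * P t (n - 1))
    (hda : ∀ n t i j, HasDerivAt (fun s => a n s i j) (a' n t i j) t)
    (hdb : ∀ n t i j, HasDerivAt (fun s => b n s i j) (b' n t i j) t)
    (hdP : ∀ (n : ℤ) t k i j, 0 ≤ n →
      HasDerivAt (fun s => (P s n).coeff k i j)
        (((-(a n t * b n t + b n t * a (n - 1) t)) * (P t (n - 1)).coeff k
          - b n t * b (n - 1) t * (P t (n - 2)).coeff k) i j) t) :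
    ∀ (n : ℤ) t, 0 ≤ n →
      a' n t = a (n + 1) t * b (n + 1) t + b (n + 1) t * a n t
        - a n t * b n t - b n t * a (n - 1) t ∧
      b' n t = a n t * a n t * b n t - b n t * (a (n - 1) t * a (n - 1) t)
        + b (n + 1) t * b n t - b n t * b (n - 1) t := by
  intro n t hn
  have hP : IsMonicThreeTermRecurrence (P t) (a · t) (b · t) :=
    ⟨hneg t, hmonic t, hb0 t, hrec t⟩
  have hflow : ∀ m, HasCoeffDerivAt (P · m) (todaFlow (P t) (a · t) (b · t) m) t := by
    intro m k i j
    rcases lt_or_ge m 0 with hm | hm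
    · simpa [todaFlow, hneg _ m hm, hneg t (m - 1) (by omega), hneg t (m - 2) (by omega)]
        using hasCoeffDerivAt_const 0 t k i j
    · simpa only [todaFlow, coeff_sub, coeff_C_mul] using hdP m t k i j hm
  have hcompat := X_mul_eq_of_hasCoeffDerivAt_threeTerm (fun s => hrec s n hn)
    (hflow (n - 1)) (hflow n) (hflow (n + 1)) (hda n t) (hdb n t)
  refine ⟨hP.todaFlow_a_eq hn hcompat, ?_⟩
  rcases hn.eq_or_lt with rfl | hpos
  · have hb'0 : b' 0 t = 0 := HasEntrywiseDerivAt.unique (hdb 0 t)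
      (by rw [show b 0 = fun _ => 0 from funext (hb0 · 0 le_rfl)]
          exact hasEntrywiseDerivAt_const 0 t)
    simp [hb'0, hb0 t 0 le_rfl]
  · exact hP.todaFlow_b_eq hpos hcompat
end

section
/- Let dμ(x;t) be an even symmetric matrix measure with ∂_t dμ = x^2 dμ, and Q_n(x;t) its monic matrix orthogonal polynomials. Then ∂_t Q_{2n} = α_n Q_{2n-2} and ∂_t Q_{2n+1} = β_n Q_{2n-1}, where α_n = -H_n^{(0)} (H_{n-1}^{(0)})^{-1} and β_n = -H_n^{(1)} (H_{n-1}^{(1)})^{-1}. -/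
open Polynomial Finset Matrix

/-!
Differentiating `⟨Q_N, xᵏ⟩ = 0` and using `∂ₜ m_k = m_{k+2}` gives
`⟨∂ₜ Q_N, xᵏ⟩ = -⟨Q_N, x^{k+2}⟩` for `k < N`. The right side vanishes for `k < N - 2` by
orthogonality and for `k = N - 1` by parity (odd moments vanish, so `Q_N(-x) = (-1)ᴺ Q_N(x)`),
and it is `-H_N` for `k = N - 2`. Hence `∂ₜ Q_N - α Q_{N-2}` with `α = -H_N H_{N-2}⁻¹` has degree
`< N` and is orthogonal to `1, …, x^{N-1}`. Such a polynomial is zero: pairing it with `Q_d`,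
`d` its degree, gives its top coefficient times the invertible `H_dᵀ`.
-/

/-- `⟨f,g⟩ = Σ_{i,j} f_i m_{i+j} g_jᵀ` in terms of moments. -/
noncomputable def ip16 {p : ℕ} (m : ℕ → Matrix (Fin p) (Fin p) ℝ)
    (f g : Polynomial (Matrix (Fin p) (Fin p) ℝ)) : Matrix (Fin p) (Fin p) ℝ :=
  ∑ i ∈ range (f.natDegree + 1), ∑ j ∈ range (g.natDegree + 1),
    f.coeff i * m (i + j) * (g.coeff j)ᵀ

namespace MatrixOrthogonal

abbrev Mat (p : ℕ) := Matrix (Fin p) (Fin p) ℝ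

variable {p : ℕ}

/-- `⟨g, x^k⟩` for the polynomial with coefficients `g 0, …, g (N - 1)`. -/
noncomputable def momentSum (m g : ℕ → Mat p) (N k : ℕ) : Mat p :=
  ∑ a ∈ range N, g a * m (a + k)

lemma momentSum_of_le {m g : ℕ → Mat p} {N N' : ℕ} (hg : ∀ a, N ≤ a → g a = 0) (h : N ≤ N')
    (k : ℕ) : momentSum m g N' k = momentSum m g N k := by
  refine (sum_subset (range_subset_range.mpr h) fun a _ ha => ?_).symm
  rw [hg a (by simpa using ha), zero_mul]

lemma momentSum_sub_mul (m g h : ℕ → Mat p) (c : Mat p) (N k : ℕ) :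
    momentSum m (fun a => g a - c * h a) N k = momentSum m g N k - c * momentSum m h N k := by
  simp only [momentSum, sub_mul, sum_sub_distrib, mul_sum, mul_assoc]

lemma ip16_X_pow (m : ℕ → Mat p) (f : Polynomial (Mat p)) {N : ℕ} (hN : f.natDegree < N)
    (k : ℕ) : ip16 m f (X ^ k) = momentSum m f.coeff N k := by
  nontriviality Mat p
  rw [momentSum_of_le (g := f.coeff) (fun a ha => coeff_eq_zero_of_natDegree_lt (by omega)) hN]
  refine sum_congr rfl fun i _ => ?_
  simp [natDegree_X_pow, coeff_X_pow, apply_ite transpose, mul_ite, sum_ite_eq']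

lemma ip16_eq_sum_momentSum (m : ℕ → Mat p) (f g : Polynomial (Mat p)) :
    ip16 m f g = ∑ b ∈ range (g.natDegree + 1),
      momentSum m f.coeff (f.natDegree + 1) b * (g.coeff b)ᵀ := by
  rw [ip16, sum_comm]
  exact sum_congr rfl fun b _ => (sum_mul _ _ _).symm

structure IsMonicOrthogonal (m : ℕ → Mat p) (Q : ℕ → Polynomial (Mat p)) : Prop where
  isMonicOfDegree : ∀ n, (Q n).IsMonicOfDegree n
  orthogonal : ∀ n, ∀ k < n, ip16 m (Q n) (X ^ k) = 0

namespace IsMonicOrthogonal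

variable {m : ℕ → Mat p} {Q : ℕ → Polynomial (Mat p)} (hQ : IsMonicOrthogonal m Q)
include hQ

lemma coeff_self (n : ℕ) : (Q n).coeff n = 1 := by
  simpa [(hQ.isMonicOfDegree n).natDegree_eq] using (hQ.isMonicOfDegree n).monic.coeff_natDegree

lemma coeff_eq_zero_of_lt {n a : ℕ} (h : n < a) : (Q n).coeff a = 0 :=
  coeff_eq_zero_of_natDegree_lt (by rwa [(hQ.isMonicOfDegree n).natDegree_eq])

lemma ip16_X_pow (n k : ℕ) : ip16 m (Q n) (X ^ k) = momentSum m (Q n).coeff (n + 1) k :=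
  MatrixOrthogonal.ip16_X_pow m (Q n) (by rw [(hQ.isMonicOfDegree n).natDegree_eq]; omega) k

lemma momentSum_coeff {n k : ℕ} (hk : k < n) : momentSum m (Q n).coeff n k = -m (n + k) := by
  have h := hQ.ip16_X_pow n k ▸ hQ.orthogonal n k hk
  rw [momentSum, sum_range_succ, hQ.coeff_self, one_mul] at h
  exact eq_neg_of_add_eq_zero_left h

lemma ip16_self (n : ℕ) : ip16 m (Q n) (Q n) = ip16 m (Q n) (X ^ n) := by
  rw [ip16_eq_sum_momentSum, (hQ.isMonicOfDegree n).natDegree_eq, sum_range_succ,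
    ← hQ.ip16_X_pow, hQ.coeff_self, transpose_one, mul_one, add_eq_right]
  refine sum_eq_zero fun b hb => ?_
  rw [← hQ.ip16_X_pow, hQ.orthogonal n b (mem_range.mp hb), zero_mul]

section Nondegenerate

variable (hsym : ∀ k, (m k)ᵀ = m k) (hH : ∀ n, IsUnit (ip16 m (Q n) (Q n)))
include hsym hH

/-- Pairing `∑ₖ ⟨g, xᵏ⟩ (Q n)ₖᵀ` collapses, by orthogonality, to `g n Hₙᵀ`. -/
lemma last_eq_zero_of_momentSum_eq_zero {g : ℕ → Mat p} {n : ℕ}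
    (hg : ∀ k < n + 1, momentSum m g (n + 1) k = 0) : g n = 0 := by
  have hcol : ∀ a, ∑ k ∈ range (n + 1), m (a + k) * ((Q n).coeff k)ᵀ = (ip16 m (Q n) (X ^ a))ᵀ := by
    intro a
    rw [hQ.ip16_X_pow, momentSum, transpose_sum]
    exact sum_congr rfl fun k _ => by rw [transpose_mul, hsym, add_comm k a]
  have hsum : ∑ k ∈ range (n + 1), momentSum m g (n + 1) k * ((Q n).coeff k)ᵀ
      = g n * (ip16 m (Q n) (Q n))ᵀ := by
    calc ∑ k ∈ range (n + 1), momentSum m g (n + 1) k * ((Q n).coeff k)ᵀ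
        = ∑ a ∈ range (n + 1), g a * (ip16 m (Q n) (X ^ a))ᵀ := by
          simp only [momentSum, sum_mul, ← hcol, mul_sum, mul_assoc]
          exact sum_comm
      _ = g n * (ip16 m (Q n) (Q n))ᵀ := by
          rw [sum_range_succ, hQ.ip16_self, add_eq_right]
          exact sum_eq_zero fun a ha => by
            rw [hQ.orthogonal n a (mem_range.mp ha), transpose_zero, mul_zero]
  have hzero : ∑ k ∈ range (n + 1), momentSum m g (n + 1) k * ((Q n).coeff k)ᵀ = 0 :=
    sum_eq_zero fun k hk => by rw [hg k (mem_range.mp hk), zero_mul]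
  exact ((isUnit_transpose _).2 (hH n)).mul_left_eq_zero.1 (hsum.symm.trans hzero)

lemma eq_zero_of_momentSum_eq_zero {g : ℕ → Mat p} {n : ℕ} (hsupp : ∀ a, n ≤ a → g a = 0)
    (hg : ∀ k < n, momentSum m g n k = 0) : g = 0 := by
  induction n with
  | zero => exact funext fun a => hsupp a a.zero_le
  | succ n ih =>
    have hlast : g n = 0 := hQ.last_eq_zero_of_momentSum_eq_zero hsym hH hg
    have hsupp' : ∀ a, n ≤ a → g a = 0 := fun a ha =>
      (eq_or_lt_of_le ha).elim (· ▸ hlast) (hsupp a)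
    refine ih hsupp' fun k hk => ?_
    rw [← momentSum_of_le hsupp' n.le_succ]
    exact hg k (by omega)

lemma coeff_eq_zero_of_odd (hodd : ∀ j, Odd j → m j = 0) {n k : ℕ} (hnk : Odd (n + k)) :
    (Q n).coeff k = 0 := by
  -- `g` is the coefficient sequence of `(-1)ⁿ Qₙ(-x) - Qₙ`
  set g : ℕ → Mat p := fun a => ((-1 : ℝ) ^ (n + a) - 1) • (Q n).coeff a
  have hsupp : ∀ a, n ≤ a → g a = 0 := by
    intro a ha
    rcases eq_or_lt_of_le ha with rfl | h
    · simp [g, (Even.add_self n).neg_one_pow]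
    · simp [g, hQ.coeff_eq_zero_of_lt h]
  have hg : ∀ j < n, momentSum m g n j = 0 := by
    intro j hj
    have hterm : ∀ a, g a * m (a + j) = ((-1 : ℝ) ^ (n + j) - 1) • ((Q n).coeff a * m (a + j)) := by
      intro a
      rcases Nat.even_or_odd (a + j) with h | h
      · rw [smul_mul_assoc, neg_one_pow_eq_pow_mod_two, neg_one_pow_eq_pow_mod_two (n + j),
          show (n + a) % 2 = (n + j) % 2 by have := Nat.even_iff.mp h; omega]
      · rw [hodd _ h, mul_zero, mul_zero, smul_zero]
    rw [momentSum, sum_congr rfl fun a _ => hterm a, ← smul_sum, ← momentSum,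
      hQ.momentSum_coeff hj]
    rcases Nat.even_or_odd (n + j) with h | h
    · rw [h.neg_one_pow, sub_self, zero_smul]
    · rw [hodd _ h, neg_zero, smul_zero]
  have hgk := congrFun (hQ.eq_zero_of_momentSum_eq_zero hsym hH hsupp hg) k
  simp only [g, hnk.neg_one_pow, Pi.zero_apply, smul_eq_zero] at hgk
  exact hgk.resolve_left (by norm_num)

lemma ip16_X_pow_eq_zero_of_odd (hodd : ∀ j, Odd j → m j = 0) {n k : ℕ} (hnk : Odd (n + k)) :
    ip16 m (Q n) (X ^ k) = 0 := by
  rw [hQ.ip16_X_pow]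
  refine sum_eq_zero fun a _ => ?_
  rcases Nat.even_or_odd (n + a) with h | h
  · have : Odd (a + k) := by
      rw [Nat.odd_iff] at hnk ⊢; rw [Nat.even_iff] at h; omega
    rw [hodd _ this, mul_zero]
  · rw [hQ.coeff_eq_zero_of_odd hsym hH hodd h, zero_mul]

lemma eq_X_pow_of_lt_two (hodd : ∀ j, Odd j → m j = 0) {n : ℕ} (hn : n < 2) : Q n = X ^ n := by
  interval_cases n
  · exact isMonicOfDegree_zero_iff.mp (hQ.isMonicOfDegree 0)
  · rw [(hQ.isMonicOfDegree 1).monic.eq_X_add_C (hQ.isMonicOfDegree 1).natDegree_eq,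
      hQ.coeff_eq_zero_of_odd hsym hH hodd odd_one, C_0, add_zero, pow_one]

end Nondegenerate

end IsMonicOrthogonal

noncomputable def coeffDeriv (f : ℝ → Polynomial (Mat p)) (t : ℝ) (k : ℕ) : Mat p :=
  of fun i j => deriv (fun s => (f s).coeff k i j) t

lemma hasDerivAt_momentSum {m g : ℝ → ℕ → Mat p} {g' : ℕ → Mat p} {t : ℝ}
    (hm : ∀ k i j, HasDerivAt (fun s => m s k i j) (m t (k + 2) i j) t)
    (hg : ∀ a i j, HasDerivAt (fun s => g s a i j) (g' a i j) t) (N k : ℕ) (i j : Fin p) :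
    HasDerivAt (fun s => momentSum (m s) (g s) N k i j)
      ((momentSum (m t) g' N k + momentSum (m t) (g t) N (k + 2)) i j) t := by
  have hfun : (fun s => momentSum (m s) (g s) N k i j)
      = fun s => ∑ a ∈ range N, ∑ u, g s a i u * m s (a + k) u j := by
    ext s
    simp only [momentSum, Matrix.sum_apply, Matrix.mul_apply]
  have hval : (momentSum (m t) g' N k + momentSum (m t) (g t) N (k + 2)) i j
      = ∑ a ∈ range N, ∑ u, (g' a i u * m t (a + k) u j + g t a i u * m t (a + k + 2) u j) := by
    simp only [momentSum, Matrix.add_apply, Matrix.sum_apply, Matrix.mul_apply, ← sum_add_distrib,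
      add_assoc]
  rw [hfun, hval]
  exact HasDerivAt.fun_sum fun a _ => HasDerivAt.fun_sum fun u _ =>
    (hg a i u).fun_mul (hm (a + k) u j)

section TimeEvolution

variable {m : ℝ → ℕ → Mat p} {Q : ℝ → ℕ → Polynomial (Mat p)}

lemma coeffDeriv_eq_zero_of_le (hQ : ∀ t, IsMonicOrthogonal (m t) (Q t)) (t : ℝ) {N a : ℕ}
    (ha : N ≤ a) : coeffDeriv (fun s => Q s N) t a = 0 := by
  have hconst : ∀ s, (Q s N).coeff a = (Q t N).coeff a := fun s =>
    ((hQ s).isMonicOfDegree N).coeff_eq ((hQ t).isMonicOfDegree N) ha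
  ext i j
  simp [coeffDeriv, hconst]

lemma momentSum_coeffDeriv (hQ : ∀ t, IsMonicOrthogonal (m t) (Q t))
    (hmom : ∀ k t i j, HasDerivAt (fun s => m s k i j) (m t (k + 2) i j) t)
    (hdiff : ∀ n k i j t, DifferentiableAt ℝ (fun s => (Q s n).coeff k i j) t)
    (t : ℝ) {N k : ℕ} (hk : k < N) :
    momentSum (m t) (coeffDeriv (fun s => Q s N) t) N k = -ip16 (m t) (Q t N) (X ^ (k + 2)) := by
  have hderiv := hasDerivAt_momentSum (g := fun s => (Q s N).coeff)
    (g' := coeffDeriv (fun s => Q s N) t) (fun k i j => hmom k t i j)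
    (fun a i j => (hdiff N a i j t).hasDerivAt) (N + 1) k
  have horth : ∀ s, momentSum (m s) (Q s N).coeff (N + 1) k = 0 := fun s =>
    (hQ s).ip16_X_pow N k ▸ (hQ s).orthogonal N k hk
  have hsum : momentSum (m t) (coeffDeriv (fun s => Q s N) t) (N + 1) k
      + momentSum (m t) (Q t N).coeff (N + 1) (k + 2) = 0 := by
    ext i j
    exact (hderiv i j).unique
      (by simpa only [horth, Matrix.zero_apply] using hasDerivAt_const t (0 : ℝ))
  rw [momentSum_of_le (fun a ha => coeffDeriv_eq_zero_of_le hQ t ha) N.le_succ,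
    ← (hQ t).ip16_X_pow] at hsum
  exact eq_neg_of_add_eq_zero_left hsum

lemma coeffDeriv_eq (hQ : ∀ t, IsMonicOrthogonal (m t) (Q t))
    (hmom : ∀ k t i j, HasDerivAt (fun s => m s k i j) (m t (k + 2) i j) t)
    (hdiff : ∀ n k i j t, DifferentiableAt ℝ (fun s => (Q s n).coeff k i j) t) (t : ℝ)
    (hsym : ∀ k, (m t k)ᵀ = m t k) (hH : ∀ n, IsUnit (ip16 (m t) (Q t n) (Q t n)))
    (hodd : ∀ j, Odd j → m t j = 0) (N : ℕ) :
    coeffDeriv (fun s => Q s (N + 2)) t = fun k =>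
      -(ip16 (m t) (Q t (N + 2)) (Q t (N + 2)) * Ring.inverse (ip16 (m t) (Q t N) (Q t N))) *
        (Q t N).coeff k := by
  set c := -(ip16 (m t) (Q t (N + 2)) (Q t (N + 2)) * Ring.inverse (ip16 (m t) (Q t N) (Q t N)))
  have hsupp : ∀ a, N + 2 ≤ a →
      coeffDeriv (fun s => Q s (N + 2)) t a - c * (Q t N).coeff a = 0 := by
    intro a ha
    rw [coeffDeriv_eq_zero_of_le hQ t ha, (hQ t).coeff_eq_zero_of_lt (by omega), mul_zero,
      sub_zero]
  have hpair : ∀ k < N + 2, momentSum (m t)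
      (fun a => coeffDeriv (fun s => Q s (N + 2)) t a - c * (Q t N).coeff a) (N + 2) k = 0 := by
    intro k hk
    rw [momentSum_sub_mul, momentSum_coeffDeriv hQ hmom hdiff t hk,
      momentSum_of_le (fun a ha => (hQ t).coeff_eq_zero_of_lt ha) (by omega : N + 1 ≤ N + 2),
      ← (hQ t).ip16_X_pow]
    rcases (by omega : k < N ∨ k = N ∨ k = N + 1) with hk | rfl | rfl
    · rw [(hQ t).orthogonal _ _ (by omega), (hQ t).orthogonal _ _ hk, mul_zero, neg_zero,
        sub_zero]
    · rw [← (hQ t).ip16_self, ← (hQ t).ip16_self, neg_mul, mul_assoc,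
        Ring.inverse_mul_cancel _ (hH k), mul_one, sub_neg_eq_add, neg_add_cancel]
    · rw [(hQ t).ip16_X_pow_eq_zero_of_odd hsym hH hodd (by rw [Nat.odd_iff]; omega),
        (hQ t).ip16_X_pow_eq_zero_of_odd hsym hH hodd (by rw [Nat.odd_iff]; omega),
        mul_zero, neg_zero, sub_zero]
  funext k
  exact sub_eq_zero.mp (congrFun ((hQ t).eq_zero_of_momentSum_eq_zero hsym hH hsupp hpair) k)

end TimeEvolution

end MatrixOrthogonal

/-- Time evolution for an even symmetric matrix measure with `∂_t dμ = x² dμ`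
(moments evolve as `∂_t m_k = m_{k+2}`): the monic matrix orthogonal polynomials satisfy
`∂_t Q_{2n} = α_n Q_{2n-2}` and `∂_t Q_{2n+1} = β_n Q_{2n-1}` with
`α_n = -H_n^{(0)} (H_{n-1}^{(0)})⁻¹`, `β_n = -H_n^{(1)} (H_{n-1}^{(1)})⁻¹`;
for `n = 0` (convention `Q_{-1} = Q_{-2} = 0`) the derivatives vanish.
Derivatives of matrix entries are taken entrywise. -/
theorem stmt16 {p : ℕ} (m : ℝ → ℕ → Matrix (Fin p) (Fin p) ℝ)
    (hsym : ∀ t k, (m t k)ᵀ = m t k)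
    (hodd : ∀ t k, m t (2 * k + 1) = 0)
    (hmom : ∀ k t i j, HasDerivAt (fun s => m s k i j) (m t (k + 2) i j) t)
    (Q : ℝ → ℕ → Polynomial (Matrix (Fin p) (Fin p) ℝ))
    (hmonic : ∀ t n, (Q t n).Monic ∧ (Q t n).natDegree = n)
    (horth : ∀ t n, ∀ k < n, ip16 (m t) (Q t n) (X ^ k) = 0)
    (hH0 : ∀ t n, IsUnit (ip16 (m t) (Q t (2 * n)) (Q t (2 * n))))
    (hH1 : ∀ t n, IsUnit (ip16 (m t) (Q t (2 * n + 1)) (Q t (2 * n + 1))))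
    (hdiff : ∀ n k i j t, DifferentiableAt ℝ (fun s => (Q s n).coeff k i j) t) :
    (∀ t k i j, deriv (fun s => (Q s 0).coeff k i j) t = 0) ∧
    (∀ t k i j, deriv (fun s => (Q s 1).coeff k i j) t = 0) ∧
    (∀ n : ℕ, 1 ≤ n → ∀ t k i j,
      deriv (fun s => (Q s (2 * n)).coeff k i j) t =
        ((-(ip16 (m t) (Q t (2 * n)) (Q t (2 * n)) *
            Ring.inverse (ip16 (m t) (Q t (2 * (n - 1))) (Q t (2 * (n - 1)))))) *
          (Q t (2 * (n - 1))).coeff k) i j) ∧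
    (∀ n : ℕ, 1 ≤ n → ∀ t k i j,
      deriv (fun s => (Q s (2 * n + 1)).coeff k i j) t =
        ((-(ip16 (m t) (Q t (2 * n + 1)) (Q t (2 * n + 1)) *
            Ring.inverse (ip16 (m t) (Q t (2 * (n - 1) + 1)) (Q t (2 * (n - 1) + 1))))) *
          (Q t (2 * (n - 1) + 1)).coeff k) i j) := by
  have hQ : ∀ t, MatrixOrthogonal.IsMonicOrthogonal (m t) (Q t) := fun t =>
    ⟨fun n => ⟨(hmonic t n).2, (hmonic t n).1⟩, horth t⟩
  have hH : ∀ t n, IsUnit (ip16 (m t) (Q t n) (Q t n)) := fun t n => by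
    obtain ⟨c, rfl | rfl⟩ := Nat.even_or_odd' n
    exacts [hH0 t c, hH1 t c]
  have hodd' : ∀ t j, Odd j → m t j = 0 := fun t j ⟨c, hc⟩ => hc ▸ hodd t c
  have hlow : ∀ t {N} k i j, N < 2 → deriv (fun s => (Q s N).coeff k i j) t = 0 := by
    intro t N k i j hN
    simp only [(hQ _).eq_X_pow_of_lt_two (hsym _) (hH _) (hodd' _) hN, deriv_const]
  have hhigh := fun t N =>
    MatrixOrthogonal.coeffDeriv_eq hQ hmom hdiff t (hsym t) (hH t) (hodd' t) N
  refine ⟨fun t k i j => hlow t k i j (by norm_num), fun t k i j => hlow t k i j (by norm_num),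
    fun n hn t k i j => ?_, fun n hn t k i j => ?_⟩
  · obtain ⟨n, rfl⟩ := Nat.exists_eq_add_of_le' hn
    exact congrFun (congrFun (congrFun (hhigh t (2 * n)) k) i) j
  · obtain ⟨n, rfl⟩ := Nat.exists_eq_add_of_le' hn
    exact congrFun (congrFun (congrFun (hhigh t (2 * n + 1)) k) i) j
end

section
/- Let γ_n(t) be p×p matrix functions with γ_{2n} = H_n^{(0)}(H_{n-1}^{(1)})^{-1} and γ_{2n+1} = H_n^{(1)}(H_n^{(0)})^{-1} for invertible H's. Then the non-abelian Volterra lattice ∂_t γ_n = γ_{n+1} γ_n - γ_n γ_{n-1} is equivalent to the bilinear system (H_n^{(0)})^{-1} ∂_t H_n^{(0)} - (H_{n-1}^{(1)})^{-1} ∂_t H_{n-1}^{(1)} = (H_n^{(0)})^{-1} H_n^{(1)} - (H_{n-1}^{(0)})^{-1} H_{n-1}^{(1)} and (H_n^{(1)})^{-1} ∂_t H_n^{(1)} - (H_n^{(0)})^{-1} ∂_t H_n^{(0)} = (H_n^{(1)})^{-1} H_{n+1}^{(0)} - (H_{n-1}^{(1)})^{-1} H_n^{(0)}. -/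
/-!
Write each `γ_m` as a ratio `A B⁻¹` of consecutive `H`'s. Its derivative is then
`A (A⁻¹ A' - B⁻¹ B') B⁻¹`, while with `γ_{m+1} = C A⁻¹` and `γ_{m-1} = B D⁻¹` the right-hand
side of the lattice collapses to `C B⁻¹ - A D⁻¹ = A (A⁻¹ C - D⁻¹ B) B⁻¹`. Cancelling the
invertible outer factors, the lattice equation at `m = 2n` is the first bilinear equation at `n`
and the one at `m = 2n + 1` is the second.
-/

/-- Entrywise derivative of a matrix-valued function of `t`. -/
noncomputable def matDeriv19 {p : ℕ} (f : ℝ → Matrix (Fin p) (Fin p) ℝ) (t : ℝ) :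
    Matrix (Fin p) (Fin p) ℝ :=
  Matrix.of fun i j => deriv (fun s => f s i j) t

open scoped Ring

section MatrixCalculus

variable {ι : Type*} [Fintype ι] [DecidableEq ι] {f : ℝ → Matrix ι ι ℝ} {t : ℝ}

lemma differentiableAt_det_of_entries (hf : ∀ i j, DifferentiableAt ℝ (fun s => f s i j) t) :
    DifferentiableAt ℝ (fun s => (f s).det) t := by
  simp only [Matrix.det_apply, Units.smul_def, zsmul_eq_mul]
  exact DifferentiableAt.fun_sum fun σ _ =>
    (DifferentiableAt.fun_finsetProd fun i _ => hf (σ i) i).const_mul _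

lemma differentiableAt_adjugate_apply (hf : ∀ i j, DifferentiableAt ℝ (fun s => f s i j) t)
    (i j : ι) : DifferentiableAt ℝ (fun s => (f s).adjugate i j) t := by
  simp only [Matrix.adjugate_apply]
  refine differentiableAt_det_of_entries fun a b => ?_
  by_cases hab : a = j
  · simp only [Matrix.updateRow_apply, if_pos hab]
    exact differentiableAt_const _
  · simpa only [Matrix.updateRow_apply, if_neg hab] using hf a b

lemma differentiableAt_ringInverse_apply (hf : ∀ i j, DifferentiableAt ℝ (fun s => f s i j) t)
    (hu : IsUnit (f t)) (i j : ι) : DifferentiableAt ℝ (fun s => (f s)⁻¹ʳ i j) t := by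
  have hdet : (f t).det ≠ 0 := ((Matrix.isUnit_iff_isUnit_det _).mp hu).ne_zero
  have hcramer : ∀ s, (f s)⁻¹ʳ i j = ((f s).det)⁻¹ * (f s).adjugate i j := fun s => by
    rw [← Matrix.nonsing_inv_eq_ringInverse, Matrix.inv_def, Ring.inverse_eq_inv]
    rfl
  simp only [hcramer]
  exact ((differentiableAt_det_of_entries hf).inv hdet).mul (differentiableAt_adjugate_apply hf i j)

end MatrixCalculus

section MatDeriv

variable {p : ℕ} {f g : ℝ → Matrix (Fin p) (Fin p) ℝ} {t : ℝ}

lemma matDeriv19_mul (hf : ∀ i j, DifferentiableAt ℝ (fun s => f s i j) t)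
    (hg : ∀ i j, DifferentiableAt ℝ (fun s => g s i j) t) :
    matDeriv19 (fun s => f s * g s) t = matDeriv19 f t * g t + f t * matDeriv19 g t := by
  ext i j
  simp only [matDeriv19, Matrix.of_apply, Matrix.add_apply, Matrix.mul_apply]
  rw [deriv_fun_sum (A := fun k s => f s i k * g s k j) fun k _ => (hf i k).mul (hg k j),
    ← Finset.sum_add_distrib]
  exact Finset.sum_congr rfl fun k _ => deriv_fun_mul (hf i k) (hg k j)

lemma matDeriv19_ringInverse (hf : ∀ i j, DifferentiableAt ℝ (fun s => f s i j) t)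
    (hu : ∀ s, IsUnit (f s)) :
    matDeriv19 (fun s => (f s)⁻¹ʳ) t = -((f t)⁻¹ʳ * matDeriv19 f t * (f t)⁻¹ʳ) := by
  -- differentiate `f⁻¹ f = 1`
  have h := matDeriv19_mul (differentiableAt_ringInverse_apply hf (hu t)) hf
  have hconst : matDeriv19 (fun s => (f s)⁻¹ʳ * f s) t = 0 := by
    ext i j
    simp [matDeriv19, Ring.inverse_mul_cancel _ (hu _)]
  rw [hconst, eq_comm, add_eq_zero_iff_eq_neg, ← neg_mul] at h
  rw [← Ring.mul_inverse_cancel_right _ (matDeriv19 (fun s => (f s)⁻¹ʳ) t) (hu t), h, neg_mul,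
    neg_mul]

lemma matDeriv19_mul_ringInverse (hf : ∀ i j, DifferentiableAt ℝ (fun s => f s i j) t)
    (hg : ∀ i j, DifferentiableAt ℝ (fun s => g s i j) t) (hfu : IsUnit (f t))
    (hgu : ∀ s, IsUnit (g s)) :
    matDeriv19 (fun s => f s * (g s)⁻¹ʳ) t
      = f t * ((f t)⁻¹ʳ * matDeriv19 f t - (g t)⁻¹ʳ * matDeriv19 g t) * (g t)⁻¹ʳ := by
  rw [matDeriv19_mul hf (differentiableAt_ringInverse_apply hg (hgu t)),
    matDeriv19_ringInverse hg hgu]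
  rw [mul_neg, ← sub_eq_add_neg, mul_sub, sub_mul, Ring.mul_inverse_cancel_left _ _ hfu]
  simp only [mul_assoc]

end MatDeriv

lemma volterra_rhs_eq_conj {R : Type*} [Ring R] {a b : R} (ha : IsUnit a) (hb : IsUnit b)
    (c d : R) :
    c * a⁻¹ʳ * (a * b⁻¹ʳ) - a * b⁻¹ʳ * (b * d⁻¹ʳ) = a * (a⁻¹ʳ * c - d⁻¹ʳ * b) * b⁻¹ʳ := by
  simp only [mul_sub, sub_mul, mul_assoc, Ring.inverse_mul_cancel_left _ _ ha,
    Ring.mul_inverse_cancel_left _ _ ha, Ring.inverse_mul_cancel_left _ _ hb,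
    Ring.mul_inverse_cancel _ hb, mul_one]

lemma matDeriv19_ratio_eq_volterra_iff {p : ℕ} {A B : ℝ → Matrix (Fin p) (Fin p) ℝ}
    {C D : Matrix (Fin p) (Fin p) ℝ} {t : ℝ}
    (hA : ∀ i j, DifferentiableAt ℝ (fun s => A s i j) t)
    (hB : ∀ i j, DifferentiableAt ℝ (fun s => B s i j) t) (hAu : IsUnit (A t))
    (hBu : ∀ s, IsUnit (B s)) :
    matDeriv19 (fun s => A s * (B s)⁻¹ʳ) t
        = C * (A t)⁻¹ʳ * (A t * (B t)⁻¹ʳ) - A t * (B t)⁻¹ʳ * (B t * D⁻¹ʳ)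
      ↔ (A t)⁻¹ʳ * matDeriv19 A t - (B t)⁻¹ʳ * matDeriv19 B t = (A t)⁻¹ʳ * C - D⁻¹ʳ * B t := by
  rw [matDeriv19_mul_ringInverse hA hB hAu hBu, volterra_rhs_eq_conj hAu (hBu t),
    (hBu t).ringInverse.mul_left_inj, hAu.mul_right_inj]

/-- With `γ_{2n} = H_n^{(0)}(H_{n-1}^{(1)})⁻¹` and `γ_{2n+1} = H_n^{(1)}(H_n^{(0)})⁻¹` for
smooth invertible matrix functions `H_n^{(0)}, H_n^{(1)}`, the non-abelian Volterra lattice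
`∂_t γ_n = γ_{n+1} γ_n - γ_n γ_{n-1}` (for `n ≥ 2`) is equivalent to the bilinear system
`(H_n^{(0)})⁻¹ ∂_t H_n^{(0)} - (H_{n-1}^{(1)})⁻¹ ∂_t H_{n-1}^{(1)}
   = (H_n^{(0)})⁻¹ H_n^{(1)} - (H_{n-1}^{(0)})⁻¹ H_{n-1}^{(1)}` and
`(H_n^{(1)})⁻¹ ∂_t H_n^{(1)} - (H_n^{(0)})⁻¹ ∂_t H_n^{(0)}
   = (H_n^{(1)})⁻¹ H_{n+1}^{(0)} - (H_{n-1}^{(1)})⁻¹ H_n^{(0)}` (for `n ≥ 1`). -/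
theorem stmt19 {p : ℕ} (H0 H1 : ℕ → ℝ → Matrix (Fin p) (Fin p) ℝ)
    (γ : ℕ → ℝ → Matrix (Fin p) (Fin p) ℝ)
    (hsm0 : ∀ n t i j, DifferentiableAt ℝ (fun s => H0 n s i j) t)
    (hsm1 : ∀ n t i j, DifferentiableAt ℝ (fun s => H1 n s i j) t)
    (hU0 : ∀ n t, IsUnit (H0 n t)) (hU1 : ∀ n t, IsUnit (H1 n t))
    (hγe : ∀ (n : ℕ) t, 1 ≤ n → γ (2 * n) t = H0 n t * Ring.inverse (H1 (n - 1) t))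
    (hγo : ∀ (n : ℕ) t, γ (2 * n + 1) t = H1 n t * Ring.inverse (H0 n t)) :
    (∀ (m : ℕ) t, 2 ≤ m →
        matDeriv19 (γ m) t = γ (m + 1) t * γ m t - γ m t * γ (m - 1) t)
    ↔ (∀ (n : ℕ) t, 1 ≤ n →
        (Ring.inverse (H0 n t) * matDeriv19 (H0 n) t
            - Ring.inverse (H1 (n - 1) t) * matDeriv19 (H1 (n - 1)) t
          = Ring.inverse (H0 n t) * H1 n t
            - Ring.inverse (H0 (n - 1) t) * H1 (n - 1) t) ∧
        (Ring.inverse (H1 n t) * matDeriv19 (H1 n) t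
            - Ring.inverse (H0 n t) * matDeriv19 (H0 n) t
          = Ring.inverse (H1 n t) * H0 (n + 1) t
            - Ring.inverse (H1 (n - 1) t) * H0 n t)) := by
  have hEven : ∀ n t, 1 ≤ n →
      (matDeriv19 (γ (2 * n)) t = γ (2 * n + 1) t * γ (2 * n) t - γ (2 * n) t * γ (2 * n - 1) t
        ↔ Ring.inverse (H0 n t) * matDeriv19 (H0 n) t
            - Ring.inverse (H1 (n - 1) t) * matDeriv19 (H1 (n - 1)) t
          = Ring.inverse (H0 n t) * H1 n t - Ring.inverse (H0 (n - 1) t) * H1 (n - 1) t) := by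
    intro n t hn
    rw [show 2 * n - 1 = 2 * (n - 1) + 1 by omega, hγo, hγo,
      show γ (2 * n) = fun s => H0 n s * (H1 (n - 1) s)⁻¹ʳ from funext fun s => hγe n s hn]
    exact matDeriv19_ratio_eq_volterra_iff (hsm0 n t) (hsm1 (n - 1) t) (hU0 n t) (hU1 (n - 1))
  have hOdd : ∀ n t, 1 ≤ n →
      (matDeriv19 (γ (2 * n + 1)) t
          = γ (2 * n + 1 + 1) t * γ (2 * n + 1) t - γ (2 * n + 1) t * γ (2 * n + 1 - 1) t
        ↔ Ring.inverse (H1 n t) * matDeriv19 (H1 n) t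
            - Ring.inverse (H0 n t) * matDeriv19 (H0 n) t
          = Ring.inverse (H1 n t) * H0 (n + 1) t - Ring.inverse (H1 (n - 1) t) * H0 n t) := by
    intro n t hn
    rw [show 2 * n + 1 + 1 = 2 * (n + 1) by ring, Nat.add_sub_cancel, hγe (n + 1) t (by omega),
      hγe n t hn, show γ (2 * n + 1) = fun s => H1 n s * (H0 n s)⁻¹ʳ from funext (hγo n)]
    exact matDeriv19_ratio_eq_volterra_iff (hsm1 n t) (hsm0 n t) (hU1 n t) (hU0 n)
  constructor
  · intro hV n t hn
    exact ⟨(hEven n t hn).1 (hV _ t (by omega)), (hOdd n t hn).1 (hV _ t (by omega))⟩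
  · intro hB m t hm
    obtain ⟨n, rfl | rfl⟩ := Nat.even_or_odd' m
    · exact (hEven n t (by omega)).2 (hB n t (by omega)).1
    · exact (hOdd n t (by omega)).2 (hB n t (by omega)).2
end
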